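/- arXiv:1312.5627 — 8 statements merged into one kernel-verified Lean document; each statement's English description precedes it below -/
import Mathlib

section
/- Let Γ be a numerical semigroup and let Δ, Δ' be Γ-semimodules. A map f : Δ → Δ' satisfies f(γ + x) = γ + f(x) for all γ ∈ Γ and x ∈ Δ if and only if there exists an integer c such that f(x) = x + c for all x ∈ Δ. In particular, every such map is injective. -/
/-- A numerical semigroup, viewed as a subset of `ℤ`: an additive submonoid of `ℕ`
with finite complement in `ℕ`. -/
def IsNumericalSemigroup (Γ : Set ℤ) : Prop :=
  (∀ x ∈ Γ, 0 ≤ x) ∧ (0 : ℤ) ∈ Γ ∧ (∀ x ∈ Γ, ∀ y ∈ Γ, x + y ∈ Γ) ∧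
    {x : ℤ | 0 ≤ x ∧ x ∉ Γ}.Finite

/-- A `Γ`-semimodule: a nonempty subset of `ℤ`, bounded below, with `Δ + Γ ⊆ Δ`. -/
def IsGammaSemimodule (Γ Δ : Set ℤ) : Prop :=
  Δ.Nonempty ∧ (∃ m : ℤ, ∀ x ∈ Δ, m ≤ x) ∧ ∀ x ∈ Δ, ∀ γ ∈ Γ, x + γ ∈ Δ

/-- A map `f : Δ → Δ'` is a `Γ`-homomorphism iff it is translation by some `c ∈ ℤ`;
in particular every `Γ`-homomorphism is injective. -/
theorem homomorphisms_are_translations (Γ Δ Δ' : Set ℤ)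
    (hΓ : IsNumericalSemigroup Γ)
    (hΔ : IsGammaSemimodule Γ Δ) (hΔ' : IsGammaSemimodule Γ Δ')
    (f : ℤ → ℤ) (hf : ∀ x ∈ Δ, f x ∈ Δ') :
    ((∀ γ ∈ Γ, ∀ x ∈ Δ, f (γ + x) = γ + f x) ↔ ∃ c : ℤ, ∀ x ∈ Δ, f x = x + c) ∧
    ((∀ γ ∈ Γ, ∀ x ∈ Δ, f (γ + x) = γ + f x) → Set.InjOn f Δ) := by
  obtain ⟨hpos, h0, hadd, hfin⟩ := hΓ
  obtain ⟨⟨x₀, hx₀⟩, hbd, hmod⟩ := hΔ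
  -- a conductor bound: every integer ≥ B'+1 is in Γ
  obtain ⟨B, hB⟩ := hfin.bddAbove
  set B' : ℤ := max B 0 with hB'def
  have hcond : ∀ z : ℤ, B' + 1 ≤ z → z ∈ Γ := by
    intro z hz
    by_contra hzΓ
    have hz0 : 0 ≤ z := le_trans (by simp [hB'def]; omega) hz
    have : z ≤ B := hB ⟨hz0, hzΓ⟩
    have : z ≤ B' := le_trans this (le_max_left _ _)
    omega
  have key : (∀ γ ∈ Γ, ∀ x ∈ Δ, f (γ + x) = γ + f x) →
      ∀ x ∈ Δ, ∀ y ∈ Δ, f x - x = f y - y := by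
    intro hfγ x hx y hy
    set M : ℤ := B' + 1 + max x y with hM
    have hγ₁ : M - x ∈ Γ := hcond _ (by simp [hM]; omega)
    have hγ₂ : M - y ∈ Γ := hcond _ (by simp [hM]; omega)
    have e1 := hfγ _ hγ₁ x hx
    have e2 := hfγ _ hγ₂ y hy
    have : (M - x) + x = (M - y) + y := by ring
    rw [this] at e1
    rw [e1] at e2
    omega
  constructor
  · constructor
    · intro hfγ
      refine ⟨f x₀ - x₀, fun x hx => ?_⟩
      have := key hfγ x hx x₀ hx₀
      omega
    · rintro ⟨c, hc⟩ γ hγ x hx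
      have hγx : γ + x ∈ Δ := by
        have := hmod x hx γ hγ
        rwa [add_comm] at this
      rw [hc _ hγx, hc _ hx]
      ring
  · intro hfγ x hx y hy hxy
    have := key hfγ x hx y hy
    omega
end

section
/- Let Γ = ⟨α, β⟩ with α, β coprime, 2 ≤ α < β. Let I = {0, i₁, …, iₙ} be a Γ-lean set with n ≥ 1, where i_k = αβ − a_kα − b_kβ with integers a_k, b_k ≥ 1, indexed so that a₁ > a₂ > … > aₙ and b₁ < b₂ < … < bₙ. Then the dual of Δ_I = ⋃_{i∈I}(i + Γ) equals Δ_I* = (a₁α + Γ) ∪ ⋃_{k=1}^{n−1} (a_{k+1}α + b_kβ + Γ) ∪ (b_nβ + Γ). -/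
/-- The numerical semigroup `⟨α, β⟩ = {pα + qβ : p, q ∈ ℕ}`, viewed inside `ℤ`. -/
def Gamma (α β : ℕ) : Set ℤ := {x : ℤ | ∃ p q : ℕ, x = (p : ℤ) * α + (q : ℤ) * β}

/-- The dual `Δ* = {c ∈ ℤ : c + Δ ⊆ ⟨α,β⟩}` of an `⟨α,β⟩`-semimodule. -/
def dualSet (α β : ℕ) (Δ : Set ℤ) : Set ℤ := {c : ℤ | ∀ x ∈ Δ, c + x ∈ Gamma α β}

/-- An `⟨α,β⟩`-lean set: a set of natural numbers whose nonzero elements are gaps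
and such that the positive difference of any two elements is a gap. -/
def IsLeanSet (α β : ℕ) (I : Set ℤ) : Prop :=
  (∀ x ∈ I, 0 ≤ x) ∧ (∀ x ∈ I, x ≠ 0 → x ∉ Gamma α β) ∧
    ∀ x ∈ I, ∀ y ∈ I, 0 < x - y → x - y ∉ Gamma α β

lemma mem_Gamma_of_nonneg {α β : ℕ} {u v : ℤ} (hu : 0 ≤ u) (hv : 0 ≤ v) :
    u * α + v * β ∈ Gamma α β := by
  exact ⟨u.toNat, v.toNat, by rw [Int.toNat_of_nonneg hu, Int.toNat_of_nonneg hv]⟩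

lemma Gamma_add {α β : ℕ} {x y : ℤ} (hx : x ∈ Gamma α β) (hy : y ∈ Gamma α β) :
    x + y ∈ Gamma α β := by
  obtain ⟨p, q, rfl⟩ := hx
  obtain ⟨p', q', rfl⟩ := hy
  exact ⟨p + p', q + q', by push_cast; ring⟩

lemma Gamma_canonical {α β : ℕ} (hα : 0 < α) {x : ℤ} (hx : x ∈ Gamma α β) :
    ∃ p q : ℤ, 0 ≤ p ∧ 0 ≤ q ∧ q < α ∧ x = p * α + q * β := by
  obtain ⟨p, q, rfl⟩ := hx
  refine ⟨(p : ℤ) + (β : ℤ) * (q / α : ℕ), ((q % α : ℕ) : ℤ), by positivity, by positivity,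
    by exact_mod_cast Nat.mod_lt q hα, ?_⟩
  have h := Nat.div_add_mod q α
  have h' : ((α : ℤ)) * ((q / α : ℕ) : ℤ) + ((q % α : ℕ) : ℤ) = (q : ℤ) := by exact_mod_cast h
  linear_combination (-(β : ℤ)) * h'

lemma coeff_nonneg {α β : ℕ} (hα : 0 < α) (hcop : Nat.Coprime α β) {u v : ℤ}
    (hv0 : 0 ≤ v) (hvα : v < α) (hx : u * α + v * β ∈ Gamma α β) : 0 ≤ u := by
  obtain ⟨p, q, hp, hq, hqα, hrep⟩ := Gamma_canonical hα hx
  have hcopZ : IsCoprime (α : ℤ) (β : ℤ) := Nat.isCoprime_iff_coprime.mpr hcop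
  have hdvd : (α : ℤ) ∣ (q - v) * β := ⟨u - p, by linarith [hrep]⟩
  have hdvd2 : (α : ℤ) ∣ (q - v) := hcopZ.dvd_of_dvd_mul_right hdvd
  obtain ⟨t, ht⟩ := hdvd2
  have ht0 : t = 0 := by
    rcases lt_trichotomy t 0 with h | h | h
    · nlinarith [(by exact_mod_cast hα : (0:ℤ) < α)]
    · exact h
    · nlinarith [(by exact_mod_cast hα : (0:ℤ) < α)]
  have hqv : q = v := by rw [ht0, mul_zero] at ht; omega
  have heq : u * α = p * α := by rw [hqv] at hrep; linarith
  have hα' : (0:ℤ) < α := by exact_mod_cast hα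
  have := mul_right_cancel₀ (ne_of_gt hα') heq
  omega

/-- Theorem 3.1: for a lean set `I = {0, i₁, …, iₙ}` with `i_k = αβ - a_kα - b_kβ`
ordered increasingly with respect to `<_L` (i.e. `a` strictly decreasing and `b`
strictly increasing), the dual of `Δ_I = ⋃_{i∈I}(i + Γ)` is
`(a₁α + Γ) ∪ ⋃_{k=1}^{n-1} (a_{k+1}α + b_kβ + Γ) ∪ (b_nβ + Γ)`. -/
theorem dual_of_leanModule_generators (α β : ℕ)
    (hα : 2 ≤ α) (hαβ : α < β) (hcop : Nat.Coprime α β)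
    (n : ℕ) (hn : 1 ≤ n) (a b i : ℕ → ℤ)
    (ha : ∀ k, 1 ≤ k → k ≤ n → 1 ≤ a k ∧ a k ≤ (β : ℤ) - 1)
    (hb : ∀ k, 1 ≤ k → k ≤ n → 1 ≤ b k ∧ b k ≤ (α : ℤ) - 1)
    (hi : ∀ k, 1 ≤ k → k ≤ n → i k = (α : ℤ) * β - a k * α - b k * β)
    (hadec : ∀ k, 1 ≤ k → k < n → a (k + 1) < a k)
    (hbinc : ∀ k, 1 ≤ k → k < n → b k < b (k + 1))
    (hlean : IsLeanSet α β ({0} ∪ (fun k => i k) '' (Set.Icc 1 n))) :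
    dualSet α β (Gamma α β ∪ ⋃ k ∈ Set.Icc 1 n, (fun γ => i k + γ) '' Gamma α β) =
      ((fun γ => a 1 * α + γ) '' Gamma α β) ∪
        (⋃ k ∈ Set.Ico 1 n, (fun γ => a (k + 1) * α + b k * β + γ) '' Gamma α β) ∪
        ((fun γ => b n * β + γ) '' Gamma α β) := by
  classical
  have hα0 : 0 < α := by omega
  have hαZ : (2:ℤ) ≤ α := by exact_mod_cast hα
  have hαβZ : (α:ℤ) < β := by exact_mod_cast hαβ
  have hamono : ∀ j k : ℕ, 1 ≤ j → j ≤ k → k ≤ n → a k ≤ a j := by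
    intro j k hj hjk
    induction k, hjk using Nat.le_induction with
    | base => intro _; exact le_refl _
    | succ m hm ih =>
      intro hmn
      have h1 : a (m+1) < a m := hadec m (le_trans hj hm) (by omega)
      have h2 := ih (by omega)
      linarith
  have hbmono : ∀ j k : ℕ, 1 ≤ j → j ≤ k → k ≤ n → b j ≤ b k := by
    intro j k hj hjk
    induction k, hjk using Nat.le_induction with
    | base => intro _; exact le_refl _
    | succ m hm ih =>
      intro hmn
      have h1 : b m < b (m+1) := hbinc m (le_trans hj hm) (by omega)
      have h2 := ih (by omega)
      linarith
  have hzeroΓ : (0:ℤ) ∈ Gamma α β := ⟨0, 0, by simp⟩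
  ext c
  constructor
  · intro hc
    have hcΓ : c ∈ Gamma α β := by
      have := hc 0 (Or.inl hzeroΓ)
      simpa using this
    obtain ⟨p, q, hp, hq, hqα, hcpq⟩ := Gamma_canonical hα0 hcΓ
    have key : ∀ k, 1 ≤ k → k ≤ n → q < b k → a k ≤ p := by
      intro k hk1 hkn hqbk
      have hx : c + i k ∈ Gamma α β := by
        have hmem : i k + 0 ∈ (fun γ => i k + γ) '' Gamma α β := ⟨0, hzeroΓ, rfl⟩
        have := hc (i k + 0) (Or.inr (Set.mem_biUnion ⟨hk1, hkn⟩ hmem))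
        simpa using this
      have hb' := hb k hk1 hkn
      have heq : (p - a k) * α + (q - b k + (α:ℤ)) * β = c + i k := by
        rw [hcpq, hi k hk1 hkn]; ring
      have := coeff_nonneg hα0 hcop (u := p - a k) (v := q - b k + α)
        (by linarith) (by linarith) (heq ▸ hx)
      linarith
    by_cases hqbn : b n ≤ q
    · refine Or.inr ⟨p * α + (q - b n) * β, mem_Gamma_of_nonneg hp (by linarith), ?_⟩
      simp only []
      rw [hcpq]; ring
    · push_neg at hqbn
      have hex : ∃ k, 1 ≤ k ∧ k ≤ n ∧ q < b k := ⟨n, hn, le_refl n, hqbn⟩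
      set k := Nat.find hex with hkdef
      obtain ⟨hk1, hkn, hqbk⟩ := Nat.find_spec hex
      have hpk : a k ≤ p := key k hk1 hkn hqbk
      by_cases hk : k = 1
      · refine Or.inl (Or.inl ⟨(p - a 1) * α + q * β,
          mem_Gamma_of_nonneg (by rw [← hk]; linarith) hq, ?_⟩)
        simp only []
        rw [hcpq]; ring
      · have hk2 : 2 ≤ k := by omega
        have hmin := Nat.find_min hex (show k - 1 < k by omega)
        have hbk1 : b (k-1) ≤ q := by
          by_contra h
          push_neg at h
          exact hmin ⟨by omega, by omega, h⟩
        refine Or.inl (Or.inr ?_)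
        rw [Set.mem_iUnion₂]
        refine ⟨k - 1, ⟨by omega, by omega⟩, (p - a k) * α + (q - b (k-1)) * β,
          mem_Gamma_of_nonneg (by linarith) (by linarith), ?_⟩
        have hk1eq : k - 1 + 1 = k := by omega
        simp only [hk1eq]
        rw [hcpq]; ring
  · intro hc
    -- first: c = base + γ₀ with base determined; we show membership in dual
    have ha1 := ha 1 le_rfl hn
    have hbn := hb n hn le_rfl
    intro x hx
    -- decompose x
    rcases hx with hxΓ | hxU
    · -- x ∈ Γ : show c + x ∈ Γ
      rcases hc with (⟨γ₀, hγ₀, rfl⟩ | hmid) | ⟨γ₀, hγ₀, rfl⟩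
      · have : a 1 * (α:ℤ) = a 1 * α + 0 * β := by ring
        exact Gamma_add (Gamma_add (this ▸ mem_Gamma_of_nonneg (by linarith) le_rfl) hγ₀) hxΓ
      · rw [Set.mem_iUnion₂] at hmid
        obtain ⟨j, ⟨hj1, hjn⟩, γ₀, hγ₀, rfl⟩ := hmid
        have haj := ha (j+1) (by omega) (by omega)
        have hbj := hb j hj1 (by omega)
        have : a (j+1) * (α:ℤ) + b j * β + γ₀ + x =
            (a (j+1) * α + b j * β) + (γ₀ + x) := by ring
        rw [this]
        exact Gamma_add (mem_Gamma_of_nonneg (by linarith) (by linarith)) (Gamma_add hγ₀ hxΓ)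
      · have : b n * (β:ℤ) = 0 * α + b n * β := by ring
        exact Gamma_add (Gamma_add (this ▸ mem_Gamma_of_nonneg le_rfl (by linarith)) hγ₀) hxΓ
    · rw [Set.mem_iUnion₂] at hxU
      obtain ⟨m, ⟨hm1, hmn⟩, γ', hγ', rfl⟩ := hxU
      simp only []
      have ham := ha m hm1 hmn
      have hbm := hb m hm1 hmn
      have him := hi m hm1 hmn
      rcases hc with (⟨γ₀, hγ₀, rfl⟩ | hmid) | ⟨γ₀, hγ₀, rfl⟩
      · -- c = a 1 * α + γ₀
        have hge : a m ≤ a 1 := hamono 1 m le_rfl hm1 hmn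
        have heq : a 1 * (α:ℤ) + γ₀ + (i m + γ') =
            ((a 1 - a m) * α + ((α:ℤ) - b m) * β) + (γ₀ + γ') := by
          rw [him]; ring
        rw [heq]
        exact Gamma_add (mem_Gamma_of_nonneg (by linarith) (by linarith)) (Gamma_add hγ₀ hγ')
      · rw [Set.mem_iUnion₂] at hmid
        obtain ⟨j, ⟨hj1, hjn⟩, γ₀, hγ₀, rfl⟩ := hmid
        have hbj := hb j hj1 (by omega)
        have haj1 := ha (j+1) (by omega) (by omega)
        by_cases hmj : m ≤ j
        · have hble : b m ≤ b j := hbmono m j hm1 hmj (by omega)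
          have heq : a (j+1) * (α:ℤ) + b j * β + γ₀ + (i m + γ') =
              (((β:ℤ) + a (j+1) - a m) * α + (b j - b m) * β) + (γ₀ + γ') := by
            rw [him]; ring
          rw [heq]
          exact Gamma_add (mem_Gamma_of_nonneg (by linarith) (by linarith)) (Gamma_add hγ₀ hγ')
        · push_neg at hmj
          have hale : a m ≤ a (j+1) := hamono (j+1) m (by omega) (by omega) hmn
          have heq : a (j+1) * (α:ℤ) + b j * β + γ₀ + (i m + γ') =
              ((a (j+1) - a m) * α + ((α:ℤ) + b j - b m) * β) + (γ₀ + γ') := by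
            rw [him]; ring
          rw [heq]
          exact Gamma_add (mem_Gamma_of_nonneg (by linarith) (by linarith)) (Gamma_add hγ₀ hγ')
      · -- c = b n * β + γ₀
        have hble : b m ≤ b n := hbmono m n hm1 hmn le_rfl
        have heq : b n * (β:ℤ) + γ₀ + (i m + γ') =
            (((β:ℤ) - a m) * α + (b n - b m) * β) + (γ₀ + γ') := by
          rw [him]; ring
        rw [heq]
        exact Gamma_add (mem_Gamma_of_nonneg (by linarith) (by linarith)) (Gamma_add hγ₀ hγ')
end

section
/- Let Γ = ⟨α, β⟩ with α, β coprime, 2 ≤ α < β. Let I = {0, i₁, …, iₙ} be a Γ-lean set and Δ_I = ⋃_{i∈I}(i + Γ). Then (Δ_I*)* = Δ_I. -/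
lemma mem_gamma_of_rep {α β : ℕ} {z p q : ℤ} (hp : 0 ≤ p) (hq : 0 ≤ q)
    (h : z = p * α + q * β) : z ∈ Gamma α β :=
  ⟨p.toNat, q.toNat, by rw [Int.toNat_of_nonneg hp, Int.toNat_of_nonneg hq]; exact h⟩

lemma gamma_add {α β : ℕ} {a b : ℤ} (ha : a ∈ Gamma α β) (hb : b ∈ Gamma α β) :
    a + b ∈ Gamma α β := by
  obtain ⟨p, q, hpq⟩ := ha
  obtain ⟨p', q', hpq'⟩ := hb
  exact ⟨p + p', q + q', by push_cast; rw [hpq, hpq']; ring⟩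

lemma isCoprime_int {α β : ℕ} (hcop : Nat.Coprime α β) : IsCoprime (α : ℤ) (β : ℤ) := by
  rw [Int.isCoprime_iff_gcd_eq_one]
  exact_mod_cast hcop

lemma exists_rep {α β : ℕ} (hcop : Nat.Coprime α β) (hβ : 0 < β) (z : ℤ) :
    ∃ p q : ℤ, 0 ≤ p ∧ p < β ∧ z = p * α + q * β := by
  obtain ⟨u, v, huv⟩ := isCoprime_int hcop
  have hβ' : (0 : ℤ) < β := by exact_mod_cast hβ
  refine ⟨(z * u) % β, z * v + ((z * u) / β) * α,
    Int.emod_nonneg _ (ne_of_gt hβ'), Int.emod_lt_of_pos _ hβ', ?_⟩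
  have h := Int.mul_ediv_add_emod (z * u) β
  linear_combination -(α : ℤ) * h - z * huv

lemma rep_nonneg {α β : ℕ} (hcop : Nat.Coprime α β) (hβ : 0 < β) {z p q : ℤ}
    (hp0 : 0 ≤ p) (hpβ : p < β) (h : z = p * α + q * β) (hz : z ∈ Gamma α β) : 0 ≤ q := by
  obtain ⟨p', q', h'⟩ := hz
  have hβ' : (0 : ℤ) < β := by exact_mod_cast hβ
  have hp' : (0 : ℤ) ≤ p' := Int.natCast_nonneg p'
  have hq' : (0 : ℤ) ≤ q' := Int.natCast_nonneg q'
  have heq : ((p' : ℤ) - p) * α = (q - q') * β := by linarith [h, h', mul_comm (q : ℤ) (β : ℤ)]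
  have hdvd : (β : ℤ) ∣ ((p' : ℤ) - p) := by
    have hd : (β : ℤ) ∣ ((p' : ℤ) - p) * α := ⟨q - q', by linarith [heq]⟩
    exact (isCoprime_int hcop).symm.dvd_of_dvd_mul_right hd
  obtain ⟨k, hk⟩ := hdvd
  have hk0 : 0 ≤ k := by nlinarith
  have hq : q = q' + k * α := by
    have : (β : ℤ) * (k * α) = (β : ℤ) * (q - q') := by linear_combination heq - (α : ℤ) * hk
    have := mul_left_cancel₀ (ne_of_gt hβ') this
    linarith
  have : (0 : ℤ) ≤ k * α := mul_nonneg hk0 (Int.natCast_nonneg α)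
  linarith

/-- Symmetry of the semigroup `⟨α,β⟩`: `z ∈ Γ ↔ F - z ∉ Γ`, where `F = αβ - α - β`. -/
lemma mem_gamma_iff_sub_notMem {α β : ℕ} (hα : 2 ≤ α) (hαβ : α < β)
    (hcop : Nat.Coprime α β) (z : ℤ) :
    z ∈ Gamma α β ↔ ((α : ℤ) * β - α - β) - z ∉ Gamma α β := by
  have hβ : 0 < β := by omega
  have hβ' : (0 : ℤ) < β := by exact_mod_cast hβ
  obtain ⟨p, q, hp0, hpβ, hz⟩ := exists_rep hcop hβ z
  have hrepF : ((α : ℤ) * β - α - β) - z = ((β : ℤ) - 1 - p) * α + (-1 - q) * β := by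
    rw [hz]; ring
  constructor
  · intro hzΓ hFz
    have hq : 0 ≤ q := rep_nonneg hcop hβ hp0 hpβ hz hzΓ
    have hq' : 0 ≤ -1 - q :=
      rep_nonneg hcop hβ (by linarith) (by linarith) hrepF hFz
    linarith
  · intro hFz
    rcases le_or_gt 0 q with hq | hq
    · exact mem_gamma_of_rep hp0 hq hz
    · exact absurd (mem_gamma_of_rep (by linarith) (by linarith) hrepF) hFz

/-- The Frobenius number is not in the semigroup. -/
lemma frobenius_notMem {α β : ℕ} (hα : 2 ≤ α) (hαβ : α < β) (hcop : Nat.Coprime α β) :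
    ((α : ℤ) * β - α - β) ∉ Gamma α β := by
  have h0 : (0 : ℤ) ∈ Gamma α β := ⟨0, 0, by simp⟩
  have := (mem_gamma_iff_sub_notMem hα hαβ hcop 0).mp h0
  simpa using this

/-- For a `Γ`-closed set `Δ`, the dual is the reflection of the complement. -/
lemma dual_eq_reflect {α β : ℕ} (hα : 2 ≤ α) (hαβ : α < β) (hcop : Nat.Coprime α β)
    {Δ : Set ℤ} (hΔ : ∀ d ∈ Δ, ∀ γ ∈ Gamma α β, d + γ ∈ Δ) :
    dualSet α β Δ = {c : ℤ | ((α : ℤ) * β - α - β) - c ∉ Δ} := by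
  ext c
  simp only [dualSet, Set.mem_setOf_eq]
  constructor
  · intro hc hFc
    have h := hc _ hFc
    rw [show c + (((α : ℤ) * β - α - β) - c) = ((α : ℤ) * β - α - β) by ring] at h
    exact frobenius_notMem hα hαβ hcop h
  · intro hFc d hd
    by_contra hcd
    have hFcd : ((α : ℤ) * β - α - β) - (c + d) ∈ Gamma α β := by
      by_contra h
      exact hcd ((mem_gamma_iff_sub_notMem hα hαβ hcop (c + d)).mpr h)
    have := hΔ d hd _ hFcd
    rw [show d + (((α : ℤ) * β - α - β) - (c + d)) = ((α : ℤ) * β - α - β) - c by ring] at this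
    exact hFc this

/-- Any dual set is `Γ`-closed. -/
lemma dual_closed {α β : ℕ} (Δ : Set ℤ) :
    ∀ c ∈ dualSet α β Δ, ∀ γ ∈ Gamma α β, c + γ ∈ dualSet α β Δ := by
  intro c hc γ hγ d hd
  rw [show c + γ + d = c + d + γ by ring]
  exact gamma_add (hc d hd) hγ

/-- For a lean set `I` containing `0` and `Δ_I = ⋃_{i∈I}(i + Γ)`, the dual of the
dual of `Δ_I` is `Δ_I` itself. -/
theorem dual_dual (α β : ℕ) (hα : 2 ≤ α) (hαβ : α < β) (hcop : Nat.Coprime α β)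
    (I : Finset ℤ) (h0 : (0 : ℤ) ∈ I) (hlean : IsLeanSet α β (I : Set ℤ)) :
    dualSet α β (dualSet α β (⋃ i ∈ (I : Set ℤ), (fun γ => i + γ) '' Gamma α β)) =
      ⋃ i ∈ (I : Set ℤ), (fun γ => i + γ) '' Gamma α β := by
  set Δ : Set ℤ := ⋃ i ∈ (I : Set ℤ), (fun γ => i + γ) '' Gamma α β with hΔdef
  have hΔ : ∀ d ∈ Δ, ∀ γ ∈ Gamma α β, d + γ ∈ Δ := by
    intro d hd γ hγ
    simp only [hΔdef, Set.mem_iUnion, Set.mem_image] at hd ⊢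
    obtain ⟨i, hi, γ₀, hγ₀, rfl⟩ := hd
    exact ⟨i, hi, γ₀ + γ, gamma_add hγ₀ hγ, by ring⟩
  rw [dual_eq_reflect hα hαβ hcop (dual_closed Δ), dual_eq_reflect hα hαβ hcop hΔ]
  ext c
  simp only [Set.mem_setOf_eq, not_not]
  rw [show ((α : ℤ) * β - α - β) - (((α : ℤ) * β - α - β) - c) = c by ring]
end

section
/- Let Γ = ⟨α, β⟩ with α, β coprime, 2 ≤ α < β. Let I = {0, i₁, …, iₙ} be a Γ-lean set with n ≥ 1, where i_k = αβ − a_kα − b_kβ with integers a_k, b_k ≥ 1, indexed so that a₁ > a₂ > … > aₙ and b₁ < b₂ < … < bₙ, and let Δ_I = ⋃_{i∈I}(i + Γ). Define the Γ-semimodule Δ̂_I = Γ ∪ ⋃_{k=1}^{n−1} ((b_kβ − (a₁ − a_{k+1})α) + Γ) ∪ ((b_nβ − a₁α) + Γ). Then Δ̂_I* = a₁α + Δ_I. -/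
namespace GammaAux

lemma mem_of (α β : ℕ) {p q x : ℤ} (hp : 0 ≤ p) (hq : 0 ≤ q)
    (hx : x = p * α + q * β) : x ∈ Gamma α β := by
  refine ⟨p.toNat, q.toNat, ?_⟩
  rw [hx, Int.toNat_of_nonneg hp, Int.toNat_of_nonneg hq]

lemma zero_mem (α β : ℕ) : (0 : ℤ) ∈ Gamma α β := ⟨0, 0, by simp⟩

lemma add_mem {α β : ℕ} {x y : ℤ} (hx : x ∈ Gamma α β) (hy : y ∈ Gamma α β) :
    x + y ∈ Gamma α β := by
  obtain ⟨p, q, rfl⟩ := hx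
  obtain ⟨p', q', rfl⟩ := hy
  exact ⟨p + p', q + q', by push_cast; ring⟩

lemma exists_repr (α β : ℕ) (hcop : Nat.Coprime α β) (hβ : 0 < β) (z : ℤ) :
    ∃ p q : ℤ, 0 ≤ p ∧ p < β ∧ z = p * α + q * β := by
  have hβ' : (β : ℤ) ≠ 0 := by exact_mod_cast hβ.ne'
  have h1 : (1 : ℤ) = α * Int.gcdA α β + β * Int.gcdB α β := by
    have := Int.gcd_eq_gcd_ab (α : ℤ) (β : ℤ)
    rwa [Int.gcd_natCast_natCast, hcop, Nat.cast_one] at this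
  set A := Int.gcdA α β
  set B := Int.gcdB α β
  refine ⟨(z * A) % β, z * B + ((z * A) / β) * α, Int.emod_nonneg _ hβ',
    Int.emod_lt_of_pos _ (by exact_mod_cast hβ), ?_⟩
  have hdm : (β : ℤ) * ((z * A) / β) + (z * A) % β = z * A := Int.mul_ediv_add_emod _ _
  have hz : z = z * (α * A + β * B) := by rw [← h1]; ring
  nlinarith [hdm, hz]

lemma mem_norm (α β : ℕ) (hcop : Nat.Coprime α β) {p q : ℤ}
    (hp0 : 0 ≤ p) (hpβ : p < β) :
    p * α + q * β ∈ Gamma α β ↔ 0 ≤ q := by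
  constructor
  · rintro ⟨p', q', h⟩
    by_contra hq
    push_neg at hq
    have key : (p - p') * α = (q' - q) * β := by nlinarith [h]
    have hdvd : (β : ℤ) ∣ (p - p') * α := ⟨q' - q, by linarith [key]⟩
    have hco : IsCoprime (β : ℤ) (α : ℤ) := Nat.isCoprime_iff_coprime.mpr hcop.symm
    have hdvd2 : (β : ℤ) ∣ (p - p') := hco.dvd_of_dvd_mul_right hdvd
    have hq'0 : (0 : ℤ) ≤ q' := Int.natCast_nonneg _
    have hp'0 : (0 : ℤ) ≤ p' := Int.natCast_nonneg _
    have hβpos : (0 : ℤ) < β := lt_of_le_of_lt hp0 hpβ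
    have hαpos : (0 : ℤ) ≤ α := Int.natCast_nonneg _
    have hpos : 0 < p - p' := by nlinarith
    have := Int.le_of_dvd hpos hdvd2
    linarith
  · intro hq
    exact mem_of α β hp0 hq rfl

lemma mem_norm_neg (α β : ℕ) (hcop : Nat.Coprime α β) {p q : ℤ}
    (hp0 : -(β : ℤ) < p) (hpβ : p < 0) :
    p * α + q * β ∈ Gamma α β ↔ (α : ℤ) ≤ q := by
  have h : p * (α : ℤ) + q * β = (p + β) * α + (q - α) * β := by ring
  rw [h, mem_norm α β hcop (by linarith) (by linarith)]
  omega

lemma stepMono (n : ℕ) (f : ℕ → ℤ) (h : ∀ k, 1 ≤ k → k < n → f k < f (k + 1)) :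
    ∀ j k, 1 ≤ j → j ≤ k → k ≤ n → f j ≤ f k := by
  intro j k hj hjk hkn
  induction k with
  | zero => omega
  | succ m ih =>
    rcases Nat.eq_or_lt_of_le hjk with rfl | h'
    · exact le_refl _
    · have h1 := ih (by omega) (by omega)
      have h2 := h m (by omega) (by omega)
      linarith

end GammaAux

/-- For a lean set `I = {0, i₁, …, iₙ}` with `i_k = αβ - a_kα - b_kβ` ordered
increasingly with respect to `<_L`, the dual of
`Δ̂_I = Γ ∪ ⋃_{k=1}^{n-1} ((b_kβ - (a₁ - a_{k+1})α) + Γ) ∪ ((b_nβ - a₁α) + Γ)`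
equals `a₁α + Δ_I`. -/
theorem dual_of_syzygyKernelModule (α β : ℕ)
    (hα : 2 ≤ α) (hαβ : α < β) (hcop : Nat.Coprime α β)
    (n : ℕ) (hn : 1 ≤ n) (a b i : ℕ → ℤ)
    (ha : ∀ k, 1 ≤ k → k ≤ n → 1 ≤ a k ∧ a k ≤ (β : ℤ) - 1)
    (hb : ∀ k, 1 ≤ k → k ≤ n → 1 ≤ b k ∧ b k ≤ (α : ℤ) - 1)
    (hi : ∀ k, 1 ≤ k → k ≤ n → i k = (α : ℤ) * β - a k * α - b k * β)
    (hadec : ∀ k, 1 ≤ k → k < n → a (k + 1) < a k)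
    (hbinc : ∀ k, 1 ≤ k → k < n → b k < b (k + 1))
    (hlean : IsLeanSet α β ({0} ∪ (fun k => i k) '' (Set.Icc 1 n))) :
    dualSet α β
        (Gamma α β ∪
          (⋃ k ∈ Set.Ico 1 n,
            (fun γ => b k * β - (a 1 - a (k + 1)) * α + γ) '' Gamma α β) ∪
          ((fun γ => b n * β - a 1 * α + γ) '' Gamma α β)) =
      (fun x => a 1 * α + x) ''
        (Gamma α β ∪ ⋃ k ∈ Set.Icc 1 n, (fun γ => i k + γ) '' Gamma α β) := by
  have hβpos : 0 < β := by omega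
  have hamono : ∀ j k, 1 ≤ j → j ≤ k → k ≤ n → a k ≤ a j := by
    intro j k hj hjk hkn
    have := GammaAux.stepMono n (fun m => - a m)
      (fun m h1 h2 => by simpa using hadec m h1 h2) j k hj hjk hkn
    simpa using this
  have hbmono : ∀ j k, 1 ≤ j → j ≤ k → k ≤ n → b j ≤ b k :=
    GammaAux.stepMono n b hbinc
  have ha1 := ha 1 le_rfl hn
  have hbn := hb n hn le_rfl
  ext c
  obtain ⟨p, q, hp0, hpβ, hc⟩ := GammaAux.exists_repr α β hcop hβpos c
  subst hc
  constructor
  · intro hmem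
    simp only [dualSet, Set.mem_setOf_eq] at hmem
    have h1 : (p * (α : ℤ) + q * β) ∈ Gamma α β := by
      have := hmem 0 (Or.inl (Or.inl (GammaAux.zero_mem α β)))
      simpa using this
    have h2 : ∀ k, 1 ≤ k → k < n →
        (p * (α : ℤ) + q * β) + (b k * β - (a 1 - a (k + 1)) * α) ∈ Gamma α β := by
      intro k hk1 hkn
      have hx : (b k * (β : ℤ) - (a 1 - a (k + 1)) * α + 0) ∈
          (⋃ k ∈ Set.Ico 1 n,
            (fun γ => b k * (β : ℤ) - (a 1 - a (k + 1)) * α + γ) '' Gamma α β) := by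
        apply Set.mem_biUnion (show k ∈ Set.Ico 1 n from ⟨hk1, hkn⟩)
        exact ⟨0, GammaAux.zero_mem α β, rfl⟩
      have := hmem _ (Or.inl (Or.inr hx))
      simpa using this
    have h3 : (p * (α : ℤ) + q * β) + (b n * β - a 1 * α) ∈ Gamma α β := by
      have := hmem _ (Or.inr ⟨0, GammaAux.zero_mem α β, rfl⟩)
      simpa using this
    have hq0 : 0 ≤ q := (GammaAux.mem_norm α β hcop hp0 hpβ).mp h1
    rcases le_or_gt (a 1) p with hcase | hcase
    · exact ⟨(p - a 1) * α + q * β,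
        Or.inl (GammaAux.mem_of α β (by linarith) hq0 rfl), by ring⟩
    · have hKex : ∃ K, 1 ≤ K ∧ K ≤ n ∧ a 1 - a K ≤ p ∧
          (K = n ∨ (K < n ∧ p < a 1 - a (K + 1))) := by
        classical
        set P : ℕ → Prop := fun k => a 1 - p ≤ a k with hPdef
        have hP1 : P 1 := by simp only [hPdef]; linarith
        refine ⟨Nat.findGreatest P n, Nat.le_findGreatest hn hP1,
          Nat.findGreatest_le n, ?_, ?_⟩
        · have := Nat.findGreatest_spec hn hP1
          simp only [hPdef] at this
          linarith
        · rcases eq_or_lt_of_le (Nat.findGreatest_le (P := P) n) with heq | hlt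
          · exact Or.inl heq
          · refine Or.inr ⟨hlt, ?_⟩
            have := Nat.findGreatest_is_greatest (P := P) (n := n)
              (k := Nat.findGreatest P n + 1) (by omega) (by omega)
            simp only [hPdef] at this
            push_neg at this
            linarith
      obtain ⟨K, hK1, hKn, hpK, hKtop⟩ := hKex
      have haK := ha K hK1 hKn
      have hbK := hb K hK1 hKn
      have hqK : (α : ℤ) ≤ q + b K := by
        rcases hKtop with heq | ⟨hKlt, hpK2⟩
        · subst heq
          have he : (p * (α : ℤ) + q * β) + (b K * β - a 1 * α)
              = (p - a 1) * α + (q + b K) * β := by ring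
          rw [he] at h3
          have := (GammaAux.mem_norm_neg α β hcop
            (p := p - a 1) (q := q + b K) (by linarith) (by linarith)).mp h3
          linarith
        · have h2' := h2 K hK1 hKlt
          have haK1 := ha (K + 1) (by omega) (by omega)
          have he : (p * (α : ℤ) + q * β) + (b K * β - (a 1 - a (K + 1)) * α)
              = (p - (a 1 - a (K + 1))) * α + (q + b K) * β := by ring
          rw [he] at h2'
          have := (GammaAux.mem_norm_neg α β hcop
            (p := p - (a 1 - a (K + 1))) (q := q + b K)
            (by linarith) (by linarith)).mp h2'
          linarith
      refine ⟨i K + ((p - (a 1 - a K)) * α + (q - (α - b K)) * β), Or.inr ?_, ?_⟩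
      · apply Set.mem_biUnion (show K ∈ Set.Icc 1 n from ⟨hK1, hKn⟩)
        exact ⟨_, GammaAux.mem_of α β (by linarith) (by linarith) rfl, rfl⟩
      · simp only [hi K hK1 hKn]
        ring
  · intro hmem
    obtain ⟨x, hx, hxeq0⟩ := hmem
    have hxeq : a 1 * (α : ℤ) + x = p * α + q * β := hxeq0
    have key : ∀ s : ℤ, (∃ u v : ℤ, 0 ≤ u ∧ 0 ≤ v ∧
        a 1 * (α : ℤ) + x + s = u * α + v * β) →
        (p * (α : ℤ) + q * β) + s ∈ Gamma α β := by
      rintro s ⟨u, v, hu, hv, hvu⟩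
      refine GammaAux.mem_of α β hu hv ?_
      rw [← hxeq]
      exact hvu
    have hconds : ((p * (α : ℤ) + q * β) ∈ Gamma α β) ∧
        (∀ k, 1 ≤ k → k < n →
          (p * (α : ℤ) + q * β) + (b k * β - (a 1 - a (k + 1)) * α) ∈ Gamma α β) ∧
        ((p * (α : ℤ) + q * β) + (b n * β - a 1 * α) ∈ Gamma α β) := by
      rcases hx with hx | hx
      · obtain ⟨u, v, rfl⟩ := hx
        refine ⟨?_, ?_, ?_⟩
        · have := key 0 ⟨a 1 + u, v, by linarith [Int.natCast_nonneg u],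
            Int.natCast_nonneg v, by ring⟩
          simpa using this
        · intro k hk1 hkn
          have hak1 := ha (k + 1) (by omega) (by omega)
          have hbk := hb k hk1 (by omega)
          exact key _ ⟨a (k + 1) + u, b k + v,
            by linarith [Int.natCast_nonneg u],
            by linarith [Int.natCast_nonneg v], by ring⟩
        · exact key _ ⟨u, b n + v, Int.natCast_nonneg u,
            by linarith [Int.natCast_nonneg v], by ring⟩
      · obtain ⟨j, hj, hximg⟩ := Set.mem_iUnion₂.mp hx
        obtain ⟨γ, hγ, rfl⟩ := hximg
        obtain ⟨u, v, rfl⟩ := hγ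
        have hij := hi j hj.1 hj.2
        have haj := ha j hj.1 hj.2
        have hbj := hb j hj.1 hj.2
        have haj1 : a j ≤ a 1 := hamono 1 j le_rfl hj.1 hj.2
        refine ⟨?_, ?_, ?_⟩
        · have := key 0 ⟨a 1 - a j + u, α - b j + v,
            by linarith [Int.natCast_nonneg u],
            by linarith [Int.natCast_nonneg v],
            by rw [hij]; push_cast; ring⟩
          simpa using this
        · intro k hk1 hkn
          have hak1 := ha (k + 1) (by omega) (by omega)
          have hbk := hb k hk1 (by omega)
          rcases le_or_gt (a j) (a (k + 1)) with hle | hlt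
          · exact key _ ⟨a (k + 1) - a j + u, α - b j + b k + v,
              by linarith [Int.natCast_nonneg u],
              by linarith [Int.natCast_nonneg v],
              by rw [hij]; push_cast; ring⟩
          · have hjk : j ≤ k := by
              by_contra hcon
              push_neg at hcon
              have : a j ≤ a (k + 1) := hamono (k + 1) j (by omega) (by omega) hj.2
              linarith
            have hbjk : b j ≤ b k := hbmono j k hj.1 hjk (by omega)
            exact key _ ⟨a (k + 1) - a j + β + u, b k - b j + v,
              by linarith [Int.natCast_nonneg u],
              by linarith [Int.natCast_nonneg v],
              by rw [hij]; push_cast; ring⟩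
        · have hbjn : b j ≤ b n := hbmono j n hj.1 hj.2 le_rfl
          exact key _ ⟨β - a j + u, b n - b j + v,
            by linarith [Int.natCast_nonneg u],
            by linarith [Int.natCast_nonneg v],
            by rw [hij]; push_cast; ring⟩
    obtain ⟨hc1, hc2, hc3⟩ := hconds
    simp only [dualSet, Set.mem_setOf_eq]
    intro y hy
    rcases hy with (hy | hy) | hy
    · exact GammaAux.add_mem hc1 hy
    · obtain ⟨k, hk, hyimg⟩ := Set.mem_iUnion₂.mp hy
      obtain ⟨γ, hγ, rfl⟩ := hyimg
      show p * (α : ℤ) + q * β + (b k * β - (a 1 - a (k + 1)) * α + γ) ∈ Gamma α β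
      have he : p * (α : ℤ) + q * β + (b k * β - (a 1 - a (k + 1)) * α + γ)
          = (p * (α : ℤ) + q * β + (b k * β - (a 1 - a (k + 1)) * α)) + γ := by ring
      rw [he]
      exact GammaAux.add_mem (hc2 k hk.1 hk.2) hγ
    · obtain ⟨γ, hγ, rfl⟩ := hy
      show p * (α : ℤ) + q * β + (b n * β - a 1 * α + γ) ∈ Gamma α β
      have he : p * (α : ℤ) + q * β + (b n * β - a 1 * α + γ)
          = (p * (α : ℤ) + q * β + (b n * β - a 1 * α)) + γ := by ring
      rw [he]
      exact GammaAux.add_mem hc3 hγ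
end

section
/- Let Γ = ⟨α, β⟩ with α, β coprime, both odd, and 3 ≤ α < β. Then every selfdual Γ-semimodule Δ has a minimal system of generators of odd cardinality. -/
/-- A normalized `⟨α,β⟩`-semimodule: a subset of `ℕ` containing `0`
with `Δ + Γ ⊆ Δ`. -/
def IsNormalizedSemimodule (α β : ℕ) (Δ : Set ℤ) : Prop :=
  (0 : ℤ) ∈ Δ ∧ (∀ x ∈ Δ, 0 ≤ x) ∧ ∀ x ∈ Δ, ∀ γ ∈ Gamma α β, x + γ ∈ Δ

/-- `Δ` is selfdual if `Δ*` is a shift of `Δ`. -/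
def IsSelfdual (α β : ℕ) (Δ : Set ℤ) : Prop :=
  ∃ c : ℤ, dualSet α β Δ = (fun x => c + x) '' Δ

/-- `E` is the minimal system of generators of `Δ`: it generates `Δ`
(`⋃_{x∈E}(x+Γ) = Δ`) and no proper subset of it generates `Δ`. -/
def IsMinGenSet (α β : ℕ) (Δ : Set ℤ) (E : Finset ℤ) : Prop :=
  (↑E ⊆ Δ) ∧ (⋃ x ∈ (E : Set ℤ), (fun γ => x + γ) '' Gamma α β) = Δ ∧
    ∀ F : Finset ℤ, F ⊂ E → (⋃ x ∈ (F : Set ℤ), (fun γ => x + γ) '' Gamma α β) ≠ Δ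

/-!
A Γ-semimodule `Δ` is determined by its Apéry function `a : ZMod α → ℤ`, the least element of `Δ`
in each residue class, and its minimal generators are the `a r` with `a r - β ∉ Δ`. Since `Γ` is
symmetric (`z ∈ Γ ↔ F - z ∉ Γ` for `F = αβ - α - β`), selfduality says `x ∈ Δ ↔ d - x ∉ Δ` for
some `d`, that is `a r + a (d - r) = d + α` for all `r`. This identity makes the set of generator
residues invariant under the involution `r ↦ d + β - r`. For odd `α` the involution has a single
fixed point `r₁`, and for odd `α, β` parity forbids `a r₁ = a (r₁ - β) + β`, so `r₁` is a
generator residue and the number of generators is odd.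
-/

lemma le_iff_sub_lt_of_intCast_eq {n : ℕ} (hn : 0 < n) {x y : ℤ}
    (h : (x : ZMod n) = y) : x ≤ y ↔ x - n < y := by
  obtain ⟨k, hk⟩ := (ZMod.intCast_eq_intCast_iff_dvd_sub x y n).1 h
  have hn' : (0 : ℤ) < n := by exact_mod_cast hn
  constructor
  · intro; linarith
  · intro hlt
    have : -1 < k := by nlinarith
    nlinarith

lemma exists_eq_add_mul_of_intCast_eq {n : ℕ} {x y : ℤ} (h : (x : ZMod n) = y) (hle : x ≤ y) :
    ∃ k : ℕ, y = x + k * n := by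
  obtain ⟨k, hk⟩ := (ZMod.intCast_eq_intCast_iff_dvd_sub x y n).1 h
  rcases Nat.eq_zero_or_pos n with rfl | hn
  · exact ⟨0, by simp_all⟩
  have hk0 : 0 ≤ k := by
    have hn' : (0 : ℤ) < n := by exact_mod_cast hn
    nlinarith
  exact ⟨k.toNat, by rw [Int.toNat_of_nonneg hk0]; linarith⟩

lemma ZMod.val_neg_one_sub {n : ℕ} [NeZero n] (x : ZMod n) : (-1 - x).val = n - 1 - x.val := by
  have hx := x.val_lt
  have hn := NeZero.pos n
  rw [← ZMod.val_cast_of_lt (by omega : n - 1 - x.val < n)]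
  congr 1
  rw [Nat.cast_sub (by omega), Nat.cast_sub hn, ZMod.natCast_self, ZMod.natCast_zmod_val]
  ring

lemma ZMod.add_self_eq_iff {n : ℕ} (hn : Odd n) {r e : ZMod n} : r + r = e ↔ r = 2⁻¹ * e := by
  have h2 : (2 : ZMod n) * 2⁻¹ = 1 := by
    exact_mod_cast ZMod.coe_mul_inv_eq_one 2 (Nat.coprime_two_left.2 hn)
  constructor
  · rintro rfl
    linear_combination (-r) * h2
  · rintro rfl
    linear_combination e * h2

lemma Finset.odd_card_of_involutive {ι : Type*} [DecidableEq ι] {s : Finset ι} {σ : ι → ι}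
    (hσ : Function.Involutive σ) (hs : ∀ i ∈ s, σ i ∈ s) {i₀ : ι} (hi₀ : i₀ ∈ s)
    (hfix : ∀ i, σ i = i ↔ i = i₀) : Odd s.card := by
  have hsum : ∑ _i ∈ s.erase i₀, (1 : ZMod 2) = 0 := by
    refine Finset.sum_involution (fun i _ => σ i) (fun _ _ => by decide)
      (fun i hi _ hσi => (Finset.mem_erase.1 hi).1 ((hfix i).1 hσi)) (fun i hi => ?_)
      (fun i _ => hσ i)
    obtain ⟨hne, hmem⟩ := Finset.mem_erase.1 hi
    refine Finset.mem_erase.2 ⟨fun hσi => hne ?_, hs i hmem⟩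
    rw [← hσ i, hσi, (hfix i₀).2 rfl]
  rw [Finset.sum_const, nsmul_one, ZMod.natCast_eq_zero_iff_even,
    Finset.card_erase_of_mem hi₀] at hsum
  obtain ⟨k, hk⟩ := hsum
  have := Finset.card_pos.2 ⟨i₀, hi₀⟩
  exact ⟨k, by omega⟩

/-- `a r` is the least element of `S` in the residue class `r` modulo `α`; this function
(the Apéry set of `S` with respect to `α`) determines `S`. -/
structure IsApery (α : ℕ) (S : Set ℤ) (a : ZMod α → ℤ) : Prop where
  cast_eq : ∀ r, (a r : ZMod α) = r
  mem_iff : ∀ z : ℤ, z ∈ S ↔ a z ≤ z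

namespace IsApery

variable {α : ℕ} {S : Set ℤ} {a : ZMod α → ℤ}

lemma mem (h : IsApery α S a) (r : ZMod α) : a r ∈ S := by
  rw [h.mem_iff, h.cast_eq]

lemma injective (h : IsApery α S a) : Function.Injective a :=
  Function.LeftInverse.injective h.cast_eq

variable [NeZero α]

lemma sub_notMem_iff (h : IsApery α S a) {x : ℤ} (hx : x ∈ S) : x - α ∉ S ↔ a x = x := by
  rw [h.mem_iff] at hx
  rw [h.mem_iff, show ((x - α : ℤ) : ZMod α) = x by simp, not_le,
    ← le_iff_sub_lt_of_intCast_eq (NeZero.pos α) (h.cast_eq _).symm]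
  exact ⟨fun hle => le_antisymm hx hle, fun heq => heq.ge⟩

lemma symm_iff (h : IsApery α S a) (d : ℤ) :
    (∀ z, z ∈ S ↔ d - z ∉ S) ↔ ∀ r, a r + a (d - r) = d + α := by
  have hα := NeZero.pos α
  constructor
  · intro hS r
    have hle : d - a r + α ≤ a (d - r) := by
      have hnot := (hS (a r)).1 (h.mem r)
      rw [h.mem_iff, not_le] at hnot
      push_cast [h.cast_eq] at hnot
      rw [le_iff_sub_lt_of_intCast_eq hα (by simp [h.cast_eq])]
      linarith
    have hge : a r ≤ d - a (d - r) + α := by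
      have hnot : a (d - r) - α ∉ S := by
        rw [h.sub_notMem_iff (h.mem _)]
        rw [h.cast_eq]
      have hmem := (h.mem_iff _).1 (not_not.1 (mt (hS _).2 hnot))
      rw [show ((d - (a (d - r) - α) : ℤ) : ZMod α) = r by simp [h.cast_eq]] at hmem
      linarith
    linarith
  · intro hsum z
    rw [h.mem_iff, h.mem_iff, not_le, le_iff_sub_lt_of_intCast_eq hα (h.cast_eq _)]
    push_cast
    have := hsum z
    constructor <;> intro <;> linarith

end IsApery

section Gamma

variable {α β : ℕ}

lemma Gamma.add_mem {x y : ℤ} (hx : x ∈ Gamma α β) (hy : y ∈ Gamma α β) :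
    x + y ∈ Gamma α β := by
  obtain ⟨p, q, rfl⟩ := hx
  obtain ⟨p', q', rfl⟩ := hy
  exact ⟨p + p', q + q', by push_cast; ring⟩

lemma Gamma.nonneg {x : ℤ} (hx : x ∈ Gamma α β) : 0 ≤ x := by
  obtain ⟨p, q, rfl⟩ := hx
  positivity

lemma Gamma.sub_mem_or_sub_mem {x : ℤ} (hx : x ∈ Gamma α β) (hx0 : x ≠ 0) :
    x - α ∈ Gamma α β ∨ x - β ∈ Gamma α β := by
  obtain ⟨p, q, rfl⟩ := hx
  rcases p with _ | p
  · rcases q with _ | q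
    · simp at hx0
    · exact .inr ⟨0, q, by push_cast; ring⟩
  · exact .inl ⟨p, q, by push_cast; ring⟩

variable [NeZero α]

lemma Gamma.isApery (hcop : α.Coprime β) :
    IsApery α (Gamma α β) (fun r => ((r * (β : ZMod α)⁻¹).val : ℤ) * β) := by
  have hβ := ZMod.coe_mul_inv_eq_one β hcop.symm
  have cast_eq : ∀ r : ZMod α, ((((r * (β : ZMod α)⁻¹).val : ℤ) * β : ℤ) : ZMod α) = r := by
    intro r
    push_cast [ZMod.natCast_zmod_val]
    rw [mul_assoc, mul_comm _ (β : ZMod α), hβ, mul_one]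
  refine ⟨cast_eq, fun z => ⟨?_, fun hle => ?_⟩⟩
  · rintro ⟨p, q, rfl⟩
    have hq : ((p * α + q * β : ℤ) : ZMod α) * (β : ZMod α)⁻¹ = q := by
      push_cast
      rw [ZMod.natCast_self, mul_zero, zero_add, mul_assoc, hβ, mul_one]
    rw [hq, ZMod.val_natCast]
    have : ((q % α : ℕ) : ℤ) ≤ q := by exact_mod_cast Nat.mod_le q α
    nlinarith [Int.natCast_nonneg p, Int.natCast_nonneg α, Int.natCast_nonneg β]
  · obtain ⟨k, hk⟩ := exists_eq_add_mul_of_intCast_eq (cast_eq z) hle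
    exact ⟨k, _, by rw [hk]; ring⟩

lemma Gamma.mem_iff_sub_notMem (hcop : α.Coprime β) (z : ℤ) :
    z ∈ Gamma α β ↔ α * β - α - β - z ∉ Gamma α β := by
  refine ((Gamma.isApery hcop).symm_iff _).2 (fun r => ?_) z
  have hβ := ZMod.coe_mul_inv_eq_one β hcop.symm
  have hsub : (((α * β - α - β : ℤ) : ZMod α) - r) * (β : ZMod α)⁻¹ = -1 - r * (β : ZMod α)⁻¹ := by
    push_cast
    rw [ZMod.natCast_self]
    linear_combination (-1 : ZMod α) * hβ
  simp only [hsub, ZMod.val_neg_one_sub]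
  have := (r * (β : ZMod α)⁻¹).val_lt
  have := NeZero.pos α
  push_cast [Nat.cast_sub (by omega : (r * (β : ZMod α)⁻¹).val ≤ α - 1),
    Nat.cast_sub (by omega : 1 ≤ α)]
  ring

end Gamma

section Semimodule

variable {α β : ℕ} {Δ : Set ℤ}

lemma exists_isApery [NeZero α] (hcop : α.Coprime β) (hbdd : BddBelow Δ) (hne : Δ.Nonempty)
    (hadd : ∀ x ∈ Δ, ∀ γ ∈ Gamma α β, x + γ ∈ Δ) : ∃ a : ZMod α → ℤ, IsApery α Δ a := by
  obtain ⟨x₀, hx₀⟩ := hne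
  have hclass : ∀ r : ZMod α, ∃ z ∈ Δ, (z : ZMod α) = r := by
    intro r
    have hΓ := Gamma.isApery (β := β) hcop
    refine ⟨x₀ + _, hadd x₀ hx₀ _ (hΓ.mem (r - x₀)), ?_⟩
    rw [Int.cast_add, hΓ.cast_eq, add_sub_cancel]
  have hleast : ∀ r : ZMod α, ∃ m : ℤ, (m ∈ Δ ∧ (m : ZMod α) = r) ∧
      ∀ z, z ∈ Δ ∧ (z : ZMod α) = r → m ≤ z := fun r =>
    Int.exists_least_of_bdd (hbdd.imp fun _ hb z hz => hb hz.1) (hclass r)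
  choose a ha hmin using hleast
  refine ⟨a, fun r => (ha r).2, fun z => ⟨fun hz => hmin _ z ⟨hz, rfl⟩, fun hle => ?_⟩⟩
  obtain ⟨k, hk⟩ := exists_eq_add_mul_of_intCast_eq (ha z).2 hle
  exact hk ▸ hadd _ (ha z).1 _ ⟨k, 0, by ring⟩

lemma mem_dualSet_iff [NeZero α] (hcop : α.Coprime β)
    (hadd : ∀ x ∈ Δ, ∀ γ ∈ Gamma α β, x + γ ∈ Δ) (y : ℤ) :
    y ∈ dualSet α β Δ ↔ α * β - α - β - y ∉ Δ := by
  constructor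
  · intro hy hmem
    have hF := hy _ hmem
    rw [add_sub_cancel, Gamma.mem_iff_sub_notMem hcop, sub_self] at hF
    exact hF ⟨0, 0, by simp⟩
  · intro hnot x hx
    rw [Gamma.mem_iff_sub_notMem hcop]
    intro hmem
    exact hnot (by convert hadd x hx _ hmem using 1; ring)

lemma IsSelfdual.exists_mem_iff_sub_notMem [NeZero α] (hcop : α.Coprime β)
    (hadd : ∀ x ∈ Δ, ∀ γ ∈ Gamma α β, x + γ ∈ Δ) (hsd : IsSelfdual α β Δ) :
    ∃ d : ℤ, ∀ x, x ∈ Δ ↔ d - x ∉ Δ := by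
  obtain ⟨c, hc⟩ := hsd
  refine ⟨α * β - α - β - c, fun x => ?_⟩
  have hx : x ∈ Δ ↔ c + x ∈ dualSet α β Δ := by simp [hc]
  rw [hx, mem_dualSet_iff hcop hadd, sub_add_eq_sub_sub]

end Semimodule

section MinGen

variable {α β : ℕ} {Δ : Set ℤ} {E : Finset ℤ}

lemma IsMinGenSet.sub_notMem (hE : IsMinGenSet α β Δ E) {x δ : ℤ} (hx : x ∈ E)
    (hδ : δ ∈ Gamma α β) (hδ0 : 0 < δ) : x - δ ∉ Δ := by
  obtain ⟨-, hgen, hmin⟩ := hE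
  intro hmem
  rw [← hgen] at hmem
  simp only [Set.mem_iUnion, Set.mem_image, Finset.mem_coe] at hmem
  obtain ⟨y, hy, γ, hγ, hyγ⟩ := hmem
  have hyx : y ≠ x := by
    have := Gamma.nonneg hγ
    omega
  apply hmin (E.erase x) (Finset.erase_ssubset hx)
  rw [← hgen]
  ext z
  simp only [Set.mem_iUnion, Set.mem_image, Finset.coe_erase, Set.mem_sdiff, Finset.mem_coe,
    Set.mem_singleton_iff]
  constructor
  · rintro ⟨w, ⟨hw, -⟩, γ', hγ', rfl⟩
    exact ⟨w, hw, γ', hγ', rfl⟩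
  · rintro ⟨w, hw, γ', hγ', rfl⟩
    by_cases hwx : w = x
    · refine ⟨y, ⟨hy, hyx⟩, γ + δ + γ', Gamma.add_mem (Gamma.add_mem hγ hδ) hγ', ?_⟩
      rw [hwx]
      linarith
    · exact ⟨w, ⟨hw, hwx⟩, γ', hγ', rfl⟩

lemma IsMinGenSet.mem_iff (hE : IsMinGenSet α β Δ E) (hα : 0 < α) (hβ : 0 < β) (x : ℤ) :
    x ∈ E ↔ x ∈ Δ ∧ x - α ∉ Δ ∧ x - β ∉ Δ := by
  refine ⟨fun hx => ⟨hE.1 hx, hE.sub_notMem hx ⟨1, 0, by simp⟩ (by exact_mod_cast hα),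
    hE.sub_notMem hx ⟨0, 1, by simp⟩ (by exact_mod_cast hβ)⟩, ?_⟩
  rintro ⟨hxΔ, hxα, hxβ⟩
  have hgen := hE.2.1
  rw [← hgen] at hxΔ hxα hxβ
  simp only [Set.mem_iUnion, Set.mem_image, Finset.mem_coe, not_exists, not_and] at hxΔ hxα hxβ
  obtain ⟨y, hy, γ, hγ, rfl⟩ := hxΔ
  by_cases hγ0 : γ = 0
  · simpa [hγ0] using hy
  rcases Gamma.sub_mem_or_sub_mem hγ hγ0 with h | h
  · exact (hxα y hy _ h (by ring)).elim
  · exact (hxβ y hy _ h (by ring)).elim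

open scoped Classical in
lemma IsMinGenSet.eq_image_apery [NeZero α] {a : ZMod α → ℤ} (hE : IsMinGenSet α β Δ E)
    (hβ : 0 < β) (ha : IsApery α Δ a) :
    E = (Finset.univ.filter fun r => a r - β ∉ Δ).image a := by
  ext x
  simp only [Finset.mem_image, Finset.mem_filter, Finset.mem_univ, true_and]
  rw [hE.mem_iff (NeZero.pos α) hβ]
  constructor
  · rintro ⟨hx, hxα, hxβ⟩
    have hax := (ha.sub_notMem_iff hx).1 hxα
    exact ⟨x, by rwa [hax], hax⟩
  · rintro ⟨r, hr, rfl⟩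
    exact ⟨ha.mem r, (ha.sub_notMem_iff (ha.mem r)).2 (by rw [ha.cast_eq]), hr⟩

end MinGen

open scoped Classical in
lemma IsApery.odd_card_filter {α β : ℕ} [NeZero α] {S : Set ℤ} {a : ZMod α → ℤ}
    (h : IsApery α S a) (hα : Odd α) (hβ : Odd β) (hβS : ∀ z ∈ S, z + β ∈ S) {d : ℤ}
    (hd : ∀ r, a r + a (d - r) = d + α) : Odd (Finset.univ.filter fun r => a r - β ∉ S).card := by
  have hgen : ∀ r, a r - β ∉ S ↔ a r < a (r - β) + β := by
    intro r
    rw [h.mem_iff, not_le]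
    push_cast [h.cast_eq]
    constructor <;> intro <;> linarith
  have hle : ∀ r, a r ≤ a (r - β) + β := fun r => by
    simpa [h.cast_eq] using (h.mem_iff _).1 (hβS _ (h.mem (r - β)))
  -- `d + α` is even, being `2 a r₀` at the centre `r₀` of the symmetry `r ↦ d - r`.
  have hdα : Even (d + α) := by
    set r₀ : ZMod α := 2⁻¹ * d
    have hr₀ : d - r₀ = r₀ := by
      rw [sub_eq_iff_eq_add, (ZMod.add_self_eq_iff hα).2 rfl]
    exact ⟨a r₀, by simpa [hr₀] using (hd r₀).symm⟩
  set r₁ : ZMod α := 2⁻¹ * (d + β)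
  refine Finset.odd_card_of_involutive (σ := fun r => d + β - r) (i₀ := r₁)
    (fun r => by simp) (fun r hr => ?_) ?_ (fun r => ?_)
  · simp only [Finset.mem_filter, Finset.mem_univ, true_and, hgen] at hr ⊢
    have h₁ := hd (r - β)
    have h₂ := hd r
    rw [show (d : ZMod α) - (r - β) = d + β - r by ring] at h₁
    rw [show (d : ZMod α) - r = d + β - r - β by ring] at h₂
    linarith
  · simp only [Finset.mem_filter, Finset.mem_univ, true_and, hgen]
    have h₁ := hd (r₁ - β)
    rw [show (d : ZMod α) - (r₁ - β) = r₁ by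
      rw [sub_sub_eq_add_sub, sub_eq_iff_eq_add, (ZMod.add_self_eq_iff hα).2 rfl]] at h₁
    refine lt_of_le_of_ne (hle r₁) fun heq => ?_
    have hdαβ : Even (d + α + β) := ⟨a r₁, by linarith⟩
    exact Int.not_even_iff_odd.2 hβ.natCast ((Int.even_add.1 hdαβ).1 hdα)
  · rw [sub_eq_iff_eq_add, eq_comm, ZMod.add_self_eq_iff hα]

theorem selfdual_odd_generators_general (α β : ℕ)
    (hcop : Nat.Coprime α β)
    (hαodd : Odd α) (hβodd : Odd β)
    (Δ : Set ℤ) (hΔ : IsNormalizedSemimodule α β Δ) (hsd : IsSelfdual α β Δ)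
    (E : Finset ℤ) (hE : IsMinGenSet α β Δ E) :
    Odd E.card := by
  have : NeZero α := ⟨hαodd.pos.ne'⟩
  obtain ⟨h0, hnonneg, hadd⟩ := hΔ
  obtain ⟨a, ha⟩ := exists_isApery hcop ⟨0, hnonneg⟩ ⟨0, h0⟩ hadd
  obtain ⟨d, hd⟩ := hsd.exists_mem_iff_sub_notMem hcop hadd
  rw [hE.eq_image_apery hβodd.pos ha, Finset.card_image_of_injective _ ha.injective]
  exact ha.odd_card_filter hαodd hβodd (fun z hz => hadd z hz β ⟨0, 1, by simp⟩)
    ((ha.symm_iff d).1 hd)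

/-- If `α` and `β` are both odd, any selfdual semimodule is minimally generated
by an odd number of elements. -/
theorem selfdual_odd_generators (α β : ℕ)
    (hα : 3 ≤ α) (hαβ : α < β) (hcop : Nat.Coprime α β)
    (hαodd : Odd α) (hβodd : Odd β)
    (Δ : Set ℤ) (hΔ : IsNormalizedSemimodule α β Δ) (hsd : IsSelfdual α β Δ)
    (E : Finset ℤ) (hE : IsMinGenSet α β Δ E) :
    Odd E.card :=
  selfdual_odd_generators_general α β hcop hαodd hβodd Δ hΔ hsd E hE
end

section
/- Let Γ = ⟨α, β⟩ with α, β coprime, both odd, and 3 ≤ α < β. Then the total number of sets Δ ⊆ ℕ with 0 ∈ Δ and Δ + Γ ⊆ Δ that are selfdual equals the binomial coefficient C((α−1)/2 + (β−1)/2, (α−1)/2). -/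
/-!
A normalized semimodule `Δ` is determined by its Apéry function `b ↦ min (Δ ∩ class b)`, where
classes are taken modulo `α` and indexed so that adding `β` moves class `b` to `b + 1`. This
function vanishes at `0` and satisfies `apery (b + 1) ≤ apery b + β`, with a drop that is a
multiple of `α`; the drops divided by `α` form weights `w : ZMod α → ℕ` with `∑ w = β`, and `Δ`
is recovered from the partial sums of `β - α w`, normalized at their minimum.

Since `x ∈ Γ ↔ F - x ∉ Γ` for `F = αβ - α - β`, the dual is `Δ* = {c | F - c ∉ Δ}`, so `Δ` is
selfdual iff `apery b + apery (s - b) = apery s` for some (unique) `s`. Reading the weights from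
the class `(s - 1) / 2` on, this says exactly that `w (-b) = w b`. For `α` and `β` odd, such a
`w` is given by the odd number `w 0` and by `w 1, …, w ((α - 1) / 2)`, so selfdual semimodules
correspond to multisets of size `(β - 1) / 2` on `(α + 1) / 2` points.
-/

namespace NumericalSemimodule

open Finset

section ResidueClass

variable {α β : ℕ}

-- Residues modulo `α` in units of `β`, so that adding `β` moves the class `b` to `b + 1`.
def resClass (α β : ℕ) (x : ℤ) : ZMod α := (β : ZMod α)⁻¹ * x

@[simp] lemma resClass_add (x y : ℤ) : resClass α β (x + y) = resClass α β x + resClass α β y := by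
  simp [resClass, mul_add]

@[simp] lemma resClass_sub (x y : ℤ) : resClass α β (x - y) = resClass α β x - resClass α β y := by
  simp [resClass, mul_sub]

@[simp] lemma resClass_mul (n x : ℤ) : resClass α β (n * x) = n * resClass α β x := by
  simp only [resClass, Int.cast_mul]; ring

@[simp] lemma resClass_zero : resClass α β 0 = 0 := by simp [resClass]

@[simp] lemma resClass_self_left : resClass α β α = 0 := by simp [resClass]

lemma isUnit_natCast_right (hcop : α.Coprime β) : IsUnit (β : ZMod α) :=
  (ZMod.isUnit_iff_coprime β α).2 hcop.symm

lemma resClass_self_right (hcop : α.Coprime β) : resClass α β β = 1 := by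
  simp [resClass, ZMod.inv_mul_of_unit _ (isUnit_natCast_right hcop)]

lemma intCast_eq_resClass_mul (hcop : α.Coprime β) (x : ℤ) :
    (x : ZMod α) = resClass α β x * β := by
  rw [resClass, mul_comm, ← mul_assoc, ZMod.mul_inv_of_unit _ (isUnit_natCast_right hcop), one_mul]

lemma dvd_sub_of_resClass_eq (hcop : α.Coprime β) {x y : ℤ}
    (h : resClass α β x = resClass α β y) : (α : ℤ) ∣ y - x := by
  rw [← ZMod.intCast_zmod_eq_zero_iff_dvd, Int.cast_sub, intCast_eq_resClass_mul hcop x,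
    intCast_eq_resClass_mul hcop y, h, sub_self]

lemma lt_add_iff_le_of_resClass_eq [NeZero α] (hcop : α.Coprime β) {x y : ℤ}
    (h : resClass α β x = resClass α β y) : y < x + α ↔ y ≤ x := by
  obtain ⟨k, hk⟩ := dvd_sub_of_resClass_eq hcop h
  have hα : (0 : ℤ) < α := by exact_mod_cast NeZero.pos α
  constructor
  · intro hlt
    have : k < 1 := by nlinarith
    nlinarith
  · intro hle
    linarith

end ResidueClass

section ZModLemmas

variable {α : ℕ}

lemma val_add_one_le (b : ZMod α) : (b + 1).val ≤ b.val + 1 :=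
  (ZMod.val_add_le b 1).trans
    (by rw [ZMod.val_one_eq_one_mod]; exact Nat.add_le_add_left (Nat.mod_le 1 α) _)

lemma isUnit_two (hodd : Odd α) : IsUnit (2 : ZMod α) := by
  simpa using (ZMod.isUnit_iff_coprime 2 α).2 (Nat.coprime_two_left.2 hodd)

lemma exists_two_mul_add_one_eq (hodd : Odd α) (s : ZMod α) : ∃ c, 2 * c + 1 = s :=
  ⟨(isUnit_two hodd).unit⁻¹ * (s - 1), by
    rw [← mul_assoc, IsUnit.mul_val_inv, one_mul, sub_add_cancel]⟩

variable [NeZero α]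

lemma val_add_val_neg_one_sub (b : ZMod α) : (b.val : ℤ) + (-1 - b).val = α - 1 := by
  have hb := b.val_lt
  have h : -1 - b = ((α - 1 - b.val : ℕ) : ZMod α) := by
    rw [Nat.cast_sub (by omega), Nat.cast_sub NeZero.one_le, ZMod.natCast_self,
      ZMod.natCast_zmod_val, Nat.cast_one, zero_sub]
  rw [h, ZMod.val_cast_of_lt (by omega)]
  omega

lemma zmod_induction {P : ZMod α → Prop} (zero : P 0) (succ : ∀ x, P x → P (x + 1))
    (x : ZMod α) : P x := by
  obtain ⟨n, rfl⟩ := ZMod.natCast_zmod_surjective x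
  induction n with
  | zero => simpa using zero
  | succ n ih => simpa using succ _ ih

lemma sum_range_natCast {M : Type*} [AddCommMonoid M] (f : ZMod α → M) :
    ∑ j ∈ range α, f j = ∑ b, f b :=
  sum_nbij' (↑) ZMod.val (by simp) (by simp [ZMod.val_lt])
    (fun j hj => ZMod.val_cast_of_lt (mem_range.1 hj)) (by simp) (by simp)

lemma val_neg_one_eq : ((-1 : ZMod α).val : ℤ) = α - 1 := by
  simpa using val_add_val_neg_one_sub (0 : ZMod α)

end ZModLemmas

section Apery

variable {α β : ℕ} {Δ : Set ℤ} {f : ZMod α → ℤ}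

/-- The Apéry set of `Δ` with respect to `α`, indexed by residue classes. -/
noncomputable def apery (α β : ℕ) (Δ : Set ℤ) (b : ZMod α) : ℤ :=
  (sInf {n : ℕ | (n : ℤ) ∈ Δ ∧ resClass α β n = b} : ℕ)

lemma apery_nonneg (b : ZMod α) : 0 ≤ apery α β Δ b := Nat.cast_nonneg _

lemma apery_le (hΔ : IsNormalizedSemimodule α β Δ) {x : ℤ} (hx : x ∈ Δ) :
    apery α β Δ (resClass α β x) ≤ x := by
  lift x to ℕ using hΔ.2.1 x hx
  rw [apery]
  exact Nat.cast_le.2 (Nat.sInf_le ⟨hx, rfl⟩)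

lemma apery_zero (hΔ : IsNormalizedSemimodule α β Δ) : apery α β Δ 0 = 0 :=
  le_antisymm (by simpa using apery_le hΔ hΔ.1) (apery_nonneg 0)

def ofApery (α β : ℕ) (f : ZMod α → ℤ) : Set ℤ := {x | f (resClass α β x) ≤ x}

lemma le_add_natCast_mul_of_add_one_le (hstep : ∀ b, f (b + 1) ≤ f b + β) (b : ZMod α)
    (q : ℕ) : f (b + q) ≤ f b + q * β := by
  induction q with
  | zero => simp
  | succ q ih =>
    have := hstep (b + q)
    push_cast
    rw [← add_assoc]
    linarith

lemma isNormalizedSemimodule_ofApery (hcop : α.Coprime β) (hzero : f 0 = 0)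
    (hnonneg : ∀ b, 0 ≤ f b) (hstep : ∀ b, f (b + 1) ≤ f b + β) :
    IsNormalizedSemimodule α β (ofApery α β f) := by
  refine ⟨by simp [ofApery, hzero], fun x hx => (hnonneg _).trans hx, ?_⟩
  rintro x hx _ ⟨p, q, rfl⟩
  have hp : (0 : ℤ) ≤ p * α := by positivity
  have := le_add_natCast_mul_of_add_one_le hstep (resClass α β x) q
  simp only [ofApery, Set.mem_ofPred_eq, resClass_add, resClass_mul, resClass_self_left,
    mul_zero, zero_add, resClass_self_right hcop, mul_one, Int.cast_natCast] at hx ⊢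
  linarith

variable [NeZero α]

lemma apery_mem_and_resClass (hcop : α.Coprime β) (hΔ : IsNormalizedSemimodule α β Δ)
    (b : ZMod α) : apery α β Δ b ∈ Δ ∧ resClass α β (apery α β Δ b) = b := by
  have hb : ((b.val * β : ℕ) : ℤ) ∈ Δ := by
    simpa using hΔ.2.2 0 hΔ.1 ((b.val : ℤ) * β) ⟨0, b.val, by simp⟩
  have hne : {n : ℕ | (n : ℤ) ∈ Δ ∧ resClass α β n = b}.Nonempty :=
    ⟨b.val * β, hb, by push_cast; simp [resClass_self_right hcop]⟩
  exact Nat.sInf_mem hne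

lemma apery_mem (hcop : α.Coprime β) (hΔ : IsNormalizedSemimodule α β Δ) (b : ZMod α) :
    apery α β Δ b ∈ Δ :=
  (apery_mem_and_resClass hcop hΔ b).1

lemma resClass_apery (hcop : α.Coprime β) (hΔ : IsNormalizedSemimodule α β Δ)
    (b : ZMod α) : resClass α β (apery α β Δ b) = b :=
  (apery_mem_and_resClass hcop hΔ b).2

lemma mem_iff_apery_le (hcop : α.Coprime β) (hΔ : IsNormalizedSemimodule α β Δ) (x : ℤ) :
    x ∈ Δ ↔ apery α β Δ (resClass α β x) ≤ x := by
  refine ⟨apery_le hΔ, fun hle => ?_⟩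
  obtain ⟨k, hk⟩ := dvd_sub_of_resClass_eq hcop (resClass_apery hcop hΔ (resClass α β x))
  have hα : (0 : ℤ) < α := by exact_mod_cast NeZero.pos α
  lift k to ℕ using by nlinarith
  have hmem := hΔ.2.2 _ (apery_mem hcop hΔ (resClass α β x)) (k * α) ⟨k, 0, by ring⟩
  rwa [show apery α β Δ (resClass α β x) + k * α = x by linarith] at hmem

lemma ofApery_apery (hcop : α.Coprime β) (hΔ : IsNormalizedSemimodule α β Δ) :
    ofApery α β (apery α β Δ) = Δ :=
  Set.ext fun x => (mem_iff_apery_le hcop hΔ x).symm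

lemma apery_add_one_le (hcop : α.Coprime β) (hΔ : IsNormalizedSemimodule α β Δ) (b : ZMod α) :
    apery α β Δ (b + 1) ≤ apery α β Δ b + β := by
  simpa [resClass_self_right hcop, resClass_apery hcop hΔ] using
    apery_le hΔ (hΔ.2.2 _ (apery_mem hcop hΔ b) β ⟨0, 1, by simp⟩)

lemma apery_resClass_of_sub_notMem (hcop : α.Coprime β) (hΔ : IsNormalizedSemimodule α β Δ) {x : ℤ}
    (hx : x ∈ Δ) (hxα : x - α ∉ Δ) : apery α β Δ (resClass α β x) = x := by
  refine le_antisymm (apery_le hΔ hx) ?_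
  rw [mem_iff_apery_le hcop hΔ, resClass_sub, resClass_self_left, sub_zero, not_le,
    sub_lt_iff_lt_add] at hxα
  exact (lt_add_iff_le_of_resClass_eq hcop (resClass_apery hcop hΔ _)).1 hxα

lemma apery_ofApery (hcop : α.Coprime β) (hzero : f 0 = 0) (hnonneg : ∀ b, 0 ≤ f b)
    (hstep : ∀ b, f (b + 1) ≤ f b + β) (hclass : ∀ b, resClass α β (f b) = b) :
    apery α β (ofApery α β f) = f := by
  have hΔ := isNormalizedSemimodule_ofApery hcop hzero hnonneg hstep
  funext b
  have hmem : f b ∈ ofApery α β f := by simp [ofApery, hclass]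
  have hsub : f b - α ∉ ofApery α β f := by simp [ofApery, hclass, NeZero.ne α]
  simpa [hclass] using apery_resClass_of_sub_notMem hcop hΔ hmem hsub

end Apery

section Duality

variable {α β : ℕ} [NeZero α] {Δ : Set ℤ}

lemma mem_iff_sub_notMem_of_apery_add (hcop : α.Coprime β)
    (hΔ : IsNormalizedSemimodule α β Δ) {s : ZMod α}
    (hs : ∀ b, apery α β Δ b + apery α β Δ (s - b) = apery α β Δ s) (x : ℤ) :
    x ∈ Δ ↔ apery α β Δ s - α - x ∉ Δ := by
  rw [mem_iff_apery_le hcop hΔ, mem_iff_apery_le hcop hΔ]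
  simp only [resClass_sub, resClass_apery hcop hΔ, resClass_self_left, sub_zero, not_le]
  rw [← lt_add_iff_le_of_resClass_eq hcop (resClass_apery hcop hΔ _).symm]
  have := hs (resClass α β x)
  constructor <;> intro h <;> linarith

lemma apery_sub_of_mem_iff (hcop : α.Coprime β) (hΔ : IsNormalizedSemimodule α β Δ) {e : ℤ}
    (he : ∀ x, x ∈ Δ ↔ e - x ∉ Δ) (b : ZMod α) :
    apery α β Δ (resClass α β e - b) = e + α - apery α β Δ b := by
  have hx : e + α - apery α β Δ b ∈ Δ := by
    rw [he, show e - (e + α - apery α β Δ b) = apery α β Δ b - α by ring]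
    intro hmem
    have := apery_le hΔ hmem
    simp only [resClass_sub, resClass_apery hcop hΔ, resClass_self_left, sub_zero] at this
    have hα : (0 : ℤ) < α := by exact_mod_cast NeZero.pos α
    linarith
  have hxα : e + α - apery α β Δ b - α ∉ Δ := by
    rw [show e + α - apery α β Δ b - α = e - apery α β Δ b by ring, ← he]
    exact apery_mem hcop hΔ b
  simpa [resClass_apery hcop hΔ] using apery_resClass_of_sub_notMem hcop hΔ hx hxα

lemma apery_add_of_mem_iff (hcop : α.Coprime β) (hΔ : IsNormalizedSemimodule α β Δ) {e : ℤ}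
    (he : ∀ x, x ∈ Δ ↔ e - x ∉ Δ) (b : ZMod α) :
    apery α β Δ b + apery α β Δ (resClass α β e - b) = apery α β Δ (resClass α β e) := by
  have h0 := apery_sub_of_mem_iff hcop hΔ he 0
  rw [sub_zero, apery_zero hΔ] at h0
  rw [apery_sub_of_mem_iff hcop hΔ he b, h0]
  ring

lemma eq_of_apery_add (hcop : α.Coprime β) (hΔ : IsNormalizedSemimodule α β Δ) {s t : ZMod α}
    (hs : ∀ b, apery α β Δ b + apery α β Δ (s - b) = apery α β Δ s)
    (ht : ∀ b, apery α β Δ b + apery α β Δ (t - b) = apery α β Δ t) : s = t := by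
  have hst := hs t
  have hts := ht s
  have h : apery α β Δ (s - t) = apery α β Δ 0 := by
    rw [apery_zero hΔ]
    linarith [apery_nonneg (α := α) (β := β) (Δ := Δ) (s - t),
      apery_nonneg (α := α) (β := β) (Δ := Δ) (t - s)]
  have := congrArg (resClass α β) h
  rwa [resClass_apery hcop hΔ, resClass_apery hcop hΔ, sub_eq_zero] at this

omit [NeZero α] in
lemma isNormalizedSemimodule_Gamma : IsNormalizedSemimodule α β (Gamma α β) := by
  refine ⟨⟨0, 0, by simp⟩, ?_, ?_⟩
  · rintro _ ⟨p, q, rfl⟩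
    positivity
  · rintro _ ⟨p, q, rfl⟩ _ ⟨p', q', rfl⟩
    exact ⟨p + p', q + q', by push_cast; ring⟩

lemma Gamma_eq_ofApery (hcop : α.Coprime β) :
    Gamma α β = ofApery α β (fun b => b.val * β) := by
  ext x
  simp only [ofApery, Set.mem_ofPred_eq]
  constructor
  · rintro ⟨p, q, rfl⟩
    have hq : ((q : ZMod α).val : ℤ) ≤ q := by
      rw [ZMod.val_natCast]; exact_mod_cast Nat.mod_le _ _
    have hp : (0 : ℤ) ≤ p * α := by positivity
    simp only [resClass_add, resClass_mul, resClass_self_left, resClass_self_right hcop,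
      Int.cast_natCast, mul_zero, mul_one, zero_add]
    nlinarith
  · intro hle
    obtain ⟨k, hk⟩ := dvd_sub_of_resClass_eq hcop (x := (resClass α β x).val * β) (y := x)
      (by simp [resClass_self_right hcop])
    have hα : (0 : ℤ) < α := by exact_mod_cast NeZero.pos α
    lift k to ℕ using by nlinarith
    exact ⟨k, (resClass α β x).val, by linarith⟩

lemma apery_Gamma (hcop : α.Coprime β) (b : ZMod α) :
    apery α β (Gamma α β) b = b.val * β := by
  rw [Gamma_eq_ofApery hcop, apery_ofApery hcop (f := fun b => (b.val : ℤ) * β)]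
  · simp
  · intro b; positivity
  · intro b
    have : ((b + 1).val : ℤ) ≤ b.val + 1 := by exact_mod_cast val_add_one_le b
    nlinarith
  · intro b
    simp [resClass_self_right hcop]

def frobenius (α β : ℕ) : ℤ := α * β - α - β

lemma mem_Gamma_iff_frobenius_sub_notMem (hcop : α.Coprime β) (x : ℤ) :
    x ∈ Gamma α β ↔ frobenius α β - x ∉ Gamma α β := by
  have hs : ∀ b : ZMod α, apery α β (Gamma α β) b + apery α β (Gamma α β) (-1 - b) =
      apery α β (Gamma α β) (-1) := by
    intro b
    simp only [apery_Gamma hcop]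
    rw [← add_mul, val_add_val_neg_one_sub, val_neg_one_eq]
  have hF : apery α β (Gamma α β) (-1) - α = frobenius α β := by
    rw [apery_Gamma hcop, val_neg_one_eq, frobenius]
    ring
  rw [mem_iff_sub_notMem_of_apery_add hcop isNormalizedSemimodule_Gamma hs, hF]

lemma dualSet_eq (hcop : α.Coprime β) (hΔ : IsNormalizedSemimodule α β Δ) :
    dualSet α β Δ = {c | frobenius α β - c ∉ Δ} := by
  ext c
  refine ⟨fun hc hmem => ?_, fun hc x hx => ?_⟩
  · have := hc _ hmem
    rw [add_sub_cancel] at this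
    simpa using (mem_Gamma_iff_frobenius_sub_notMem hcop _).1 this ⟨0, 0, by simp⟩
  · by_contra hnot
    rw [mem_Gamma_iff_frobenius_sub_notMem hcop, not_not] at hnot
    have := hΔ.2.2 x hx _ hnot
    rw [show x + (frobenius α β - (c + x)) = frobenius α β - c by ring] at this
    exact hc this

lemma isSelfdual_iff_exists_mem_iff (hcop : α.Coprime β) (hΔ : IsNormalizedSemimodule α β Δ) :
    IsSelfdual α β Δ ↔ ∃ e, ∀ x, x ∈ Δ ↔ e - x ∉ Δ := by
  simp only [IsSelfdual, dualSet_eq hcop hΔ, Set.image_add_left, Set.ext_iff,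
    Set.mem_ofPred_eq, Set.mem_preimage]
  constructor
  · rintro ⟨c, hc⟩
    refine ⟨frobenius α β - c, fun x => ?_⟩
    rw [show frobenius α β - c - x = frobenius α β - (c + x) by ring, hc, neg_add_cancel_left]
  · rintro ⟨e, he⟩
    refine ⟨frobenius α β - e, fun y => ?_⟩
    rw [he, not_not, show e - (frobenius α β - y) = -(frobenius α β - e) + y by ring]

lemma isSelfdual_iff_exists_apery_add (hcop : α.Coprime β) (hΔ : IsNormalizedSemimodule α β Δ) :
    IsSelfdual α β Δ ↔
      ∃ s, ∀ b, apery α β Δ b + apery α β Δ (s - b) = apery α β Δ s := by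
  rw [isSelfdual_iff_exists_mem_iff hcop hΔ]
  exact ⟨fun ⟨e, he⟩ => ⟨_, apery_add_of_mem_iff hcop hΔ he⟩,
    fun ⟨_, hs⟩ => ⟨_, mem_iff_sub_notMem_of_apery_add hcop hΔ hs⟩⟩

end Duality

section PartialSum

variable {α β : ℕ} [NeZero α] {w : ZMod α → ℕ}

/-- For `n = x.val`, this is `n * β - α * (w 0 + ⋯ + w (n - 1))`; when `∑ w = β` it is
`α`-periodic in `n`, which is what `partialSum_add_one` needs at the wrap-around `x = -1`. -/
def partialSum (α β : ℕ) (w : ZMod α → ℕ) (x : ZMod α) : ℤ :=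
  x.val * β - α * ∑ j ∈ range x.val, (w j : ℤ)

omit [NeZero α] in
@[simp] lemma partialSum_zero : partialSum α β w 0 = 0 := by simp [partialSum]

lemma partialSum_add_one (hw : ∑ b, w b = β) (x : ZMod α) :
    partialSum α β w (x + 1) = partialSum α β w x + β - α * w x := by
  have hx : x + 1 = ((x.val + 1 : ℕ) : ZMod α) := by simp
  rcases (show x.val + 1 ≤ α from x.val_lt).lt_or_eq with h | h
  · rw [partialSum, partialSum, hx, ZMod.val_cast_of_lt h, sum_range_succ]
    push_cast
    simp only [ZMod.natCast_zmod_val]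
    ring
  · have hsum : ∑ j ∈ range (x.val + 1), (w j : ℤ) = β := by
      rw [h, sum_range_natCast (fun b => (w b : ℤ))]; exact_mod_cast hw
    rw [sum_range_succ, ZMod.natCast_zmod_val] at hsum
    rw [hx, h, ZMod.natCast_self, partialSum_zero, partialSum]
    have hα : (α : ℤ) = x.val + 1 := by exact_mod_cast h.symm
    linear_combination (α : ℤ) * hsum + (β : ℤ) * hα

lemma resClass_partialSum (hcop : α.Coprime β) (x : ZMod α) :
    resClass α β (partialSum α β w x) = x := by
  simp [partialSum, resClass_self_right hcop]

lemma partialSum_injective (hcop : α.Coprime β) : Function.Injective (partialSum α β w) :=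
  fun x y h => by simpa [resClass_partialSum hcop] using congrArg (resClass α β) h

lemma partialSum_add_partialSum_one_sub (hw : ∑ b, w b = β) (hsym : ∀ b, w (-b) = w b)
    (x : ZMod α) : partialSum α β w x + partialSum α β w (1 - x) = partialSum α β w 1 := by
  induction x using zmod_induction with
  | zero => simp
  | succ x ih =>
    have h1 := partialSum_add_one hw x
    have h2 := partialSum_add_one hw (-x)
    rw [hsym, neg_add_eq_sub] at h2
    rw [show (1 : ZMod α) - (x + 1) = -x by ring]
    linarith

end PartialSum

section Weights

variable {α β : ℕ} [NeZero α] {Δ : Set ℤ}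

/-- Each step `apery (b + 1) ≤ apery b + β` falls short by a multiple of `α`; the weights
record these multiples, read from the class `c` on. -/
noncomputable def weights (α β : ℕ) (Δ : Set ℤ) (c b : ZMod α) : ℕ :=
  ((apery α β Δ (b + c) + β - apery α β Δ (b + c + 1)) / α).toNat

lemma natCast_mul_weights (hcop : α.Coprime β) (hΔ : IsNormalizedSemimodule α β Δ)
    (c b : ZMod α) :
    (α : ℤ) * weights α β Δ c b = apery α β Δ (b + c) + β - apery α β Δ (b + c + 1) := by
  have hdvd := dvd_sub_of_resClass_eq hcop (x := apery α β Δ (b + c + 1))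
    (y := apery α β Δ (b + c) + β) (by simp [resClass_apery hcop hΔ, resClass_self_right hcop])
  have hnonneg := apery_add_one_le hcop hΔ (b + c)
  rw [weights, Int.toNat_of_nonneg (Int.ediv_nonneg (by linarith) (Int.natCast_nonneg α)),
    Int.mul_ediv_cancel' hdvd]

lemma sum_weights (hcop : α.Coprime β) (hΔ : IsNormalizedSemimodule α β Δ) (c : ZMod α) :
    ∑ b, weights α β Δ c b = β := by
  have hshift : ∀ d : ZMod α, ∑ b, apery α β Δ (b + d) = ∑ b, apery α β Δ b := fun d =>
    Fintype.sum_equiv (Equiv.addRight d) _ _ (fun _ => rfl)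
  have h : (α : ℤ) * ∑ b, (weights α β Δ c b : ℤ) = α * β := by
    simp only [mul_sum, natCast_mul_weights hcop hΔ, sum_sub_distrib, sum_add_distrib,
      add_assoc, hshift, sum_const, card_univ, ZMod.card, nsmul_eq_mul]
    ring
  exact Nat.eq_of_mul_eq_mul_left (NeZero.pos α) (by exact_mod_cast h)

lemma partialSum_weights (hcop : α.Coprime β) (hΔ : IsNormalizedSemimodule α β Δ)
    (c x : ZMod α) :
    partialSum α β (weights α β Δ c) x = apery α β Δ (x + c) - apery α β Δ c := by
  induction x using zmod_induction with
  | zero => simp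
  | succ x ih =>
    rw [partialSum_add_one (sum_weights hcop hΔ c), ih, natCast_mul_weights hcop hΔ,
      add_right_comm]
    ring

lemma weights_neg (hcop : α.Coprime β) (hΔ : IsNormalizedSemimodule α β Δ) {c : ZMod α}
    (hc : ∀ b, apery α β Δ b + apery α β Δ (2 * c + 1 - b) = apery α β Δ (2 * c + 1))
    (b : ZMod α) : weights α β Δ c (-b) = weights α β Δ c b := by
  have h1 := hc (-b + c)
  have h2 := hc (-b + c + 1)
  rw [show 2 * c + 1 - (-b + c) = b + c + 1 by ring] at h1
  rw [show 2 * c + 1 - (-b + c + 1) = b + c by ring] at h2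
  have h : (α : ℤ) * weights α β Δ c (-b) = α * weights α β Δ c b := by
    rw [natCast_mul_weights hcop hΔ, natCast_mul_weights hcop hΔ]
    linarith
  exact Nat.eq_of_mul_eq_mul_left (NeZero.pos α) (by exact_mod_cast h)

end Weights

section OfWeights

variable {α β : ℕ} [NeZero α] {w : ZMod α → ℕ}

noncomputable def argminPartialSum (α β : ℕ) [NeZero α] (w : ZMod α → ℕ) : ZMod α :=
  (exists_min_image univ (partialSum α β w) univ_nonempty).choose

lemma partialSum_argminPartialSum_le (y : ZMod α) :
    partialSum α β w (argminPartialSum α β w) ≤ partialSum α β w y :=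
  (exists_min_image univ (partialSum α β w) univ_nonempty).choose_spec.2 y (mem_univ y)

noncomputable def aperyOfWeights (α β : ℕ) [NeZero α] (w : ZMod α → ℕ) (b : ZMod α) : ℤ :=
  partialSum α β w (b + argminPartialSum α β w) - partialSum α β w (argminPartialSum α β w)

noncomputable def ofWeights (α β : ℕ) [NeZero α] (w : ZMod α → ℕ) : Set ℤ :=
  ofApery α β (aperyOfWeights α β w)

@[simp] lemma aperyOfWeights_zero : aperyOfWeights α β w 0 = 0 := by
  simp [aperyOfWeights]

lemma aperyOfWeights_nonneg (b : ZMod α) : 0 ≤ aperyOfWeights α β w b :=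
  sub_nonneg.2 (partialSum_argminPartialSum_le _)

lemma aperyOfWeights_add_one (hw : ∑ b, w b = β) (b : ZMod α) :
    aperyOfWeights α β w (b + 1) =
      aperyOfWeights α β w b + β - α * w (b + argminPartialSum α β w) := by
  rw [aperyOfWeights, aperyOfWeights, add_right_comm, partialSum_add_one hw]
  ring

lemma aperyOfWeights_add_one_le (hw : ∑ b, w b = β) (b : ZMod α) :
    aperyOfWeights α β w (b + 1) ≤ aperyOfWeights α β w b + β := by
  rw [aperyOfWeights_add_one hw]
  have : (0 : ℤ) ≤ α * w (b + argminPartialSum α β w) := by positivity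
  linarith

lemma resClass_aperyOfWeights (hcop : α.Coprime β) (b : ZMod α) :
    resClass α β (aperyOfWeights α β w b) = b := by
  simp [aperyOfWeights, resClass_partialSum hcop]

lemma isNormalizedSemimodule_ofWeights (hcop : α.Coprime β) (hw : ∑ b, w b = β) :
    IsNormalizedSemimodule α β (ofWeights α β w) :=
  isNormalizedSemimodule_ofApery hcop aperyOfWeights_zero aperyOfWeights_nonneg
    (aperyOfWeights_add_one_le hw)

lemma apery_ofWeights (hcop : α.Coprime β) (hw : ∑ b, w b = β) :
    apery α β (ofWeights α β w) = aperyOfWeights α β w :=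
  apery_ofApery hcop aperyOfWeights_zero aperyOfWeights_nonneg (aperyOfWeights_add_one_le hw)
    (resClass_aperyOfWeights hcop)

lemma weights_ofWeights (hcop : α.Coprime β) (hw : ∑ b, w b = β) :
    weights α β (ofWeights α β w) (-argminPartialSum α β w) = w := by
  funext b
  have h : (α : ℤ) * weights α β (ofWeights α β w) (-argminPartialSum α β w) b = α * w b := by
    rw [natCast_mul_weights hcop (isNormalizedSemimodule_ofWeights hcop hw),
      apery_ofWeights hcop hw, aperyOfWeights_add_one hw, neg_add_cancel_right]
    ring
  exact Nat.eq_of_mul_eq_mul_left (NeZero.pos α) (by exact_mod_cast h)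

lemma argminPartialSum_weights (hcop : α.Coprime β) {Δ : Set ℤ}
    (hΔ : IsNormalizedSemimodule α β Δ) (c : ZMod α) :
    argminPartialSum α β (weights α β Δ c) = -c := by
  refine partialSum_injective hcop (le_antisymm (partialSum_argminPartialSum_le _) ?_)
  rw [partialSum_weights hcop hΔ, partialSum_weights hcop hΔ, neg_add_cancel, apery_zero hΔ]
  linarith [apery_nonneg (α := α) (β := β) (Δ := Δ) (argminPartialSum α β (weights α β Δ c) + c)]

lemma aperyOfWeights_weights (hcop : α.Coprime β) {Δ : Set ℤ}
    (hΔ : IsNormalizedSemimodule α β Δ) (c : ZMod α) :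
    aperyOfWeights α β (weights α β Δ c) = apery α β Δ := by
  funext b
  rw [aperyOfWeights, argminPartialSum_weights hcop hΔ, partialSum_weights hcop hΔ,
    partialSum_weights hcop hΔ, neg_add_cancel_right, neg_add_cancel, apery_zero hΔ]
  ring

lemma ofWeights_weights (hcop : α.Coprime β) {Δ : Set ℤ} (hΔ : IsNormalizedSemimodule α β Δ)
    (c : ZMod α) : ofWeights α β (weights α β Δ c) = Δ := by
  rw [ofWeights, aperyOfWeights_weights hcop hΔ, ofApery_apery hcop hΔ]

lemma apery_ofWeights_add (hcop : α.Coprime β) (hw : ∑ b, w b = β) (hsym : ∀ b, w (-b) = w b)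
    (b : ZMod α) :
    apery α β (ofWeights α β w) b +
        apery α β (ofWeights α β w) (2 * -argminPartialSum α β w + 1 - b) =
      apery α β (ofWeights α β w) (2 * -argminPartialSum α β w + 1) := by
  set m := argminPartialSum α β w
  have h1 := partialSum_add_partialSum_one_sub hw hsym (b + m)
  have h2 := partialSum_add_partialSum_one_sub hw hsym m
  rw [apery_ofWeights hcop hw]
  simp only [aperyOfWeights]
  rw [show 2 * -m + 1 - b + m = 1 - (b + m) by ring, show 2 * -m + 1 + m = 1 - m by ring]
  linarith

end OfWeights

section Bijection

variable {α β : ℕ} [NeZero α]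

abbrev SymmetricWeights (α β : ℕ) [NeZero α] : Type :=
  {w : ZMod α → ℕ // ∑ b, w b = β ∧ ∀ b, w (-b) = w b}

abbrev SelfdualSemimodules (α β : ℕ) : Type :=
  {Δ : Set ℤ // IsNormalizedSemimodule α β Δ ∧ IsSelfdual α β Δ}

lemma isSelfdual_ofWeights (hcop : α.Coprime β) {w : ZMod α → ℕ} (hw : ∑ b, w b = β)
    (hsym : ∀ b, w (-b) = w b) : IsSelfdual α β (ofWeights α β w) :=
  (isSelfdual_iff_exists_apery_add hcop (isNormalizedSemimodule_ofWeights hcop hw)).2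
    ⟨_, apery_ofWeights_add hcop hw hsym⟩

noncomputable def selfdualOfWeights (hcop : α.Coprime β) (w : SymmetricWeights α β) :
    SelfdualSemimodules α β :=
  ⟨ofWeights α β w.1, isNormalizedSemimodule_ofWeights hcop w.2.1,
    isSelfdual_ofWeights hcop w.2.1 w.2.2⟩

lemma selfdualOfWeights_injective (hcop : α.Coprime β) (hodd : Odd α) :
    Function.Injective (selfdualOfWeights (β := β) hcop) := by
  rintro ⟨w, hw, hsym⟩ ⟨w', hw', hsym'⟩ h
  have h : ofWeights α β w = ofWeights α β w' := congrArg Subtype.val h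
  have hcenter' := apery_ofWeights_add hcop hw' hsym'
  rw [← h] at hcenter'
  have hcenter := eq_of_apery_add hcop (isNormalizedSemimodule_ofWeights hcop hw)
    (apery_ofWeights_add hcop hw hsym) hcenter'
  have hm : argminPartialSum α β w = argminPartialSum α β w' :=
    neg_inj.1 ((isUnit_two hodd).mul_left_cancel (add_right_cancel hcenter))
  refine Subtype.ext (?_ : w = w')
  rw [← weights_ofWeights hcop hw, ← weights_ofWeights hcop hw', h, hm]

lemma selfdualOfWeights_surjective (hcop : α.Coprime β) (hodd : Odd α) :
    Function.Surjective (selfdualOfWeights (β := β) hcop) := by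
  rintro ⟨Δ, hΔ, hsd⟩
  obtain ⟨s, hs⟩ := (isSelfdual_iff_exists_apery_add hcop hΔ).1 hsd
  obtain ⟨c, rfl⟩ := exists_two_mul_add_one_eq hodd s
  exact ⟨⟨weights α β Δ c, sum_weights hcop hΔ c, weights_neg hcop hΔ hs⟩,
    Subtype.ext (ofWeights_weights hcop hΔ c)⟩

end Bijection

section Folding

variable {α : ℕ} [NeZero α]

def fold (b : ZMod α) : Fin (α / 2 + 1) :=
  ⟨b.valMinAbs.natAbs, Nat.lt_succ_of_le (ZMod.natAbs_valMinAbs_le b)⟩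

lemma fold_neg (b : ZMod α) : fold (-b) = fold b :=
  Fin.ext (ZMod.natAbs_valMinAbs_neg b)

lemma fold_eq_zero_iff {b : ZMod α} : fold b = 0 ↔ b = 0 := by
  simp [fold, Fin.ext_iff]

lemma natCast_fold (b : ZMod α) : ((fold b : ℕ) : ZMod α) = b ∨ ((fold b : ℕ) : ZMod α) = -b := by
  rw [fold, ZMod.natCast_natAbs_valMinAbs]
  split_ifs <;> simp

lemma fold_natCast (i : Fin (α / 2 + 1)) : fold ((i : ℕ) : ZMod α) = i :=
  Fin.ext (by simp [fold, ZMod.valMinAbs_natCast_of_le_half (Nat.lt_succ_iff.1 i.2)])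

lemma sum_eq_add_two_mul_of_apply_neg (hodd : Odd α) (f : ZMod α → ℕ) (hf : ∀ b, f (-b) = f b) :
    ∑ b, f b = f 0 + 2 * ∑ i : Fin (α / 2), f (i + 1 : ℕ) := by
  set a := α / 2
  have hα : α = a + a + 1 := by have := Nat.odd_iff.1 hodd; omega
  have hreflect : ∑ j ∈ range a, f (a + j + 1 : ℕ) = ∑ j ∈ range a, f (j + 1 : ℕ) := by
    rw [← sum_range_reflect]
    refine sum_congr rfl fun j hj => ?_
    rw [← hf]
    congr 1
    have hj := mem_range.1 hj
    rw [neg_eq_iff_add_eq_zero, ← Nat.cast_add, ← ZMod.natCast_self α]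
    congr 1
    omega
  rw [← sum_range_natCast, congrArg range hα, sum_range_succ', sum_range_add, hreflect,
    Fin.sum_univ_eq_sum_range (fun j => f (j + 1 : ℕ))]
  push_cast
  ring

end Folding

section Counting

variable {α β : ℕ} [NeZero α]

lemma fold_natCast_succ (i : Fin (α / 2)) : fold ((i + 1 : ℕ) : ZMod α) = i.succ :=
  fold_natCast i.succ

lemma natCast_succ_ne_zero (i : Fin (α / 2)) : ((i + 1 : ℕ) : ZMod α) ≠ 0 := fun h =>
  i.succ_ne_zero (by rw [← fold_natCast_succ, fold_eq_zero_iff, h])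

def halveWeights (w : ZMod α → ℕ) (i : Fin (α / 2 + 1)) : ℕ :=
  if i = 0 then w 0 / 2 else w (i : ℕ)

def unfoldWeights (v : Fin (α / 2 + 1) → ℕ) (b : ZMod α) : ℕ :=
  if b = 0 then 2 * v 0 + 1 else v (fold b)

lemma unfoldWeights_neg (v : Fin (α / 2 + 1) → ℕ) (b : ZMod α) :
    unfoldWeights v (-b) = unfoldWeights v b := by
  simp [unfoldWeights, fold_neg]

lemma sum_unfoldWeights (hodd : Odd α) (v : Fin (α / 2 + 1) → ℕ) :
    ∑ b, unfoldWeights v b = 2 * ∑ i, v i + 1 := by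
  rw [sum_eq_add_two_mul_of_apply_neg hodd _ (unfoldWeights_neg v), Fin.sum_univ_succ]
  simp only [unfoldWeights, if_pos, natCast_succ_ne_zero, if_false, fold_natCast_succ]
  ring

lemma sum_halveWeights (hodd : Odd α) {w : ZMod α → ℕ} (hsym : ∀ b, w (-b) = w b) :
    2 * ∑ i, halveWeights w i + w 0 % 2 = ∑ b, w b := by
  rw [sum_eq_add_two_mul_of_apply_neg hodd w hsym, Fin.sum_univ_succ]
  simp only [halveWeights, if_pos, Fin.succ_ne_zero, if_false, Fin.val_succ]
  omega

lemma apply_zero_mod_two (hα : Odd α) (hβ : Odd β) (w : SymmetricWeights α β) :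
    w.1 0 % 2 = 1 := by
  have := sum_halveWeights hα w.2.2
  have := Nat.odd_iff.1 hβ
  have := Nat.mod_lt (w.1 0) two_pos
  omega

noncomputable def symmetricWeightsEquiv (hα : Odd α) (hβ : Odd β) :
    SymmetricWeights α β ≃ {v : Fin (α / 2 + 1) → ℕ // ∑ i, v i = β / 2} where
  toFun w := ⟨halveWeights w.1, by
    have := sum_halveWeights hα w.2.2
    have := apply_zero_mod_two hα hβ w
    omega⟩
  invFun v := ⟨unfoldWeights v.1, by
    have := Nat.odd_iff.1 hβ
    rw [sum_unfoldWeights hα, v.2]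
    omega, unfoldWeights_neg v.1⟩
  left_inv w := by
    refine Subtype.ext (funext fun b => ?_)
    by_cases hb : b = 0
    · have := apply_zero_mod_two hα hβ w
      simp only [unfoldWeights, hb, if_pos, halveWeights]
      omega
    · have hfold : fold b ≠ 0 := fun h => hb (fold_eq_zero_iff.1 h)
      simp only [unfoldWeights, hb, if_false, halveWeights, hfold]
      rcases natCast_fold b with h | h <;> simp [h, w.2.2]
  right_inv v := by
    refine Subtype.ext (funext fun i => ?_)
    by_cases hi : i = 0
    · simp only [halveWeights, hi, if_pos, unfoldWeights]
      omega
    · have hcast : ((i : ℕ) : ZMod α) ≠ 0 := fun h =>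
        hi (by rw [← fold_natCast i, h, fold_eq_zero_iff])
      simp [halveWeights, hi, unfoldWeights, hcast, fold_natCast]

end Counting

end NumericalSemimodule

open NumericalSemimodule

theorem count_selfdual_odd_odd_general (α β : ℕ)
    (hcop : Nat.Coprime α β)
    (hαodd : Odd α) (hβodd : Odd β) :
    {Δ : Set ℤ | IsNormalizedSemimodule α β Δ ∧ IsSelfdual α β Δ}.ncard =
      Nat.choose ((α - 1) / 2 + (β - 1) / 2) ((α - 1) / 2) := by
  have : NeZero α := ⟨hαodd.pos.ne'⟩
  have e : SelfdualSemimodules α β ≃ Sym (Fin (α / 2 + 1)) (β / 2) :=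
    (Equiv.ofBijective _ ⟨selfdualOfWeights_injective hcop hαodd,
      selfdualOfWeights_surjective hcop hαodd⟩).symm.trans
      ((symmetricWeightsEquiv hαodd hβodd).trans (Sym.equivNatSumOfFintype _ _).symm)
  have hα : (α - 1) / 2 = α / 2 := by have := Nat.odd_iff.1 hαodd; omega
  have hβ : (β - 1) / 2 = β / 2 := by have := Nat.odd_iff.1 hβodd; omega
  change Nat.card (SelfdualSemimodules α β) = _
  rw [Nat.card_congr e, Nat.card_eq_fintype_card,
    Sym.card_sym_eq_choose, Fintype.card_fin, hα, hβ, Nat.add_right_comm, Nat.add_sub_cancel,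
    Nat.choose_symm_add]

/-- If `α` and `β` are both odd, the total number of selfdual semimodules is
`C((α-1)/2 + (β-1)/2, (α-1)/2)`. -/
theorem count_selfdual_odd_odd (α β : ℕ)
    (hα : 3 ≤ α) (hαβ : α < β) (hcop : Nat.Coprime α β)
    (hαodd : Odd α) (hβodd : Odd β) :
    {Δ : Set ℤ | IsNormalizedSemimodule α β Δ ∧ IsSelfdual α β Δ}.ncard =
      Nat.choose ((α - 1) / 2 + (β - 1) / 2) ((α - 1) / 2) :=
  count_selfdual_odd_odd_general α β hcop hαodd hβodd
end

section
/- Let Γ = ⟨α, β⟩ with α, β coprime, 2 ≤ α < β. Let I = {0, i₁, …, iₙ} be a Γ-lean set with n ≥ 1 and Δ_I = ⋃_{i∈I}(i + Γ). Then the map x ↦ αβ − x is a bijection from the minimal system of generators of the dual Δ_I* onto the minimal system of generators of the syzygy Syz(Δ_I). -/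
/-- The minimal system of generators of an `⟨α,β⟩`-semimodule `Δ`: those `x ∈ Δ`
which cannot be written as `y + γ` with `y ∈ Δ` and `0 ≠ γ ∈ ⟨α,β⟩`. -/
def minGenSet (α β : ℕ) (Δ : Set ℤ) : Set ℤ :=
  {x ∈ Δ | ∀ γ ∈ Gamma α β, γ ≠ 0 → x - γ ∉ Δ}

/-- The syzygy of an `⟨α,β⟩`-semimodule `Δ` with minimal system of generators `E`:
`Syz(Δ) = ⋃_{i,i' ∈ E, i ≠ i'} ((i + Γ) ∩ (i' + Γ))`. -/
def Syz (α β : ℕ) (Δ : Set ℤ) : Set ℤ :=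
  ⋃ i ∈ minGenSet α β Δ, ⋃ j ∈ minGenSet α β Δ, ⋃ (_ : i ≠ j),
    ((fun γ => i + γ) '' Gamma α β) ∩ ((fun γ => j + γ) '' Gamma α β)

namespace GP

variable {α β : ℕ}

lemma zero_mem : (0:ℤ) ∈ Gamma α β := ⟨0, 0, by simp⟩
lemma alpha_mem : (α:ℤ) ∈ Gamma α β := ⟨1, 0, by simp⟩
lemma beta_mem : (β:ℤ) ∈ Gamma α β := ⟨0, 1, by simp⟩

lemma add_mem {x y : ℤ} (hx : x ∈ Gamma α β) (hy : y ∈ Gamma α β) : x + y ∈ Gamma α β := by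
  obtain ⟨p, q, rfl⟩ := hx; obtain ⟨p', q', rfl⟩ := hy
  exact ⟨p + p', q + q', by push_cast; ring⟩

lemma nonneg {x : ℤ} (hx : x ∈ Gamma α β) : 0 ≤ x := by
  obtain ⟨p, q, rfl⟩ := hx; positivity

lemma pos {x : ℤ} (hx : x ∈ Gamma α β) (hne : x ≠ 0) : 0 < x :=
  lt_of_le_of_ne (nonneg hx) (Ne.symm hne)

lemma decomp {x : ℤ} (hx : x ∈ Gamma α β) (hne : x ≠ 0) :
    x - α ∈ Gamma α β ∨ x - β ∈ Gamma α β := by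
  obtain ⟨p, q, rfl⟩ := hx
  rcases Nat.eq_zero_or_pos p with hp | hp
  · rcases Nat.eq_zero_or_pos q with hq | hq
    · exfalso; apply hne; simp [hp, hq]
    · right
      refine ⟨p, q - 1, ?_⟩
      have : ((q - 1 : ℕ) : ℤ) = (q : ℤ) - 1 := by
        have : 1 ≤ q := hq; push_cast [this]; ring
      rw [this]; ring
  · left
    refine ⟨p - 1, q, ?_⟩
    have : ((p - 1 : ℕ) : ℤ) = (p : ℤ) - 1 := by
      have : 1 ≤ p := hp; push_cast [this]; ring
    rw [this]; ring

lemma sub_alpha {x : ℤ} (hx : x ∈ Gamma α β) (h : x - α ∉ Gamma α β) :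
    ∃ q : ℕ, x = (q : ℤ) * β := by
  obtain ⟨p, q, rfl⟩ := hx
  rcases Nat.eq_zero_or_pos p with hp | hp
  · exact ⟨q, by simp [hp]⟩
  · exfalso; apply h
    refine ⟨p - 1, q, ?_⟩
    have : ((p - 1 : ℕ) : ℤ) = (p : ℤ) - 1 := by
      have : 1 ≤ p := hp; push_cast [this]; ring
    rw [this]; ring

lemma sub_beta {x : ℤ} (hx : x ∈ Gamma α β) (h : x - β ∉ Gamma α β) :
    ∃ p : ℕ, x = (p : ℤ) * α := by
  obtain ⟨p, q, rfl⟩ := hx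
  rcases Nat.eq_zero_or_pos q with hq | hq
  · exact ⟨p, by simp [hq]⟩
  · exfalso; apply h
    refine ⟨p, q - 1, ?_⟩
    have : ((q - 1 : ℕ) : ℤ) = (q : ℤ) - 1 := by
      have : 1 ≤ q := hq; push_cast [this]; ring
    rw [this]; ring

lemma exists_rep (hcop : Nat.Coprime α β) (hβ : 0 < β) (n : ℤ) :
    ∃ a b : ℤ, 0 ≤ a ∧ a < β ∧ n = a * α + b * β := by
  obtain ⟨u, v, huv⟩ := Nat.isCoprime_iff_coprime.mpr hcop
  have hβZ : (0:ℤ) < β := by exact_mod_cast hβ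
  refine ⟨(n * u) % β, n * v + ((n * u) / β) * α, Int.emod_nonneg _ (ne_of_gt hβZ),
    Int.emod_lt_of_pos _ hβZ, ?_⟩
  rw [Int.emod_def]
  linear_combination (-n) * huv

lemma mem_iff_of_rep (hcop : Nat.Coprime α β) (hβ : 0 < β) {n a b : ℤ}
    (ha0 : 0 ≤ a) (haβ : a < β) (hn : n = a * α + b * β) :
    n ∈ Gamma α β ↔ 0 ≤ b := by
  constructor
  · rintro ⟨p, q, hpq⟩
    have hβdvd : (β:ℤ) ∣ ((p:ℤ) - a) := by
      have hco : IsCoprime (β:ℤ) (α:ℤ) := (Nat.isCoprime_iff_coprime.mpr hcop).symm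
      have : (β:ℤ) ∣ ((p:ℤ) - a) * α := ⟨b - q, by linarith [hpq, hn]⟩
      exact hco.dvd_of_dvd_mul_right this
    obtain ⟨k, hk⟩ := hβdvd
    have hβZ : (0:ℤ) < β := by exact_mod_cast hβ
    have hk0 : 0 ≤ k := by nlinarith [Int.natCast_nonneg p]
    have hb : b = (q:ℤ) + k * α := by
      have h1 : ((p:ℤ) - a) * α = (b - q) * β := by linarith [hpq, hn]
      rw [hk] at h1
      have : (b - q - k * α) * β = 0 := by ring_nf; linarith [h1]
      have := mul_eq_zero.mp this
      rcases this with h | h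
      · linarith
      · exact absurd h (ne_of_gt hβZ)
    rw [hb]
    positivity
  · intro hb
    refine ⟨a.toNat, b.toNat, ?_⟩
    rw [Int.toNat_of_nonneg ha0, Int.toNat_of_nonneg hb]; exact hn

lemma symmetry (hα : 2 ≤ α) (hαβ : α < β) (hcop : Nat.Coprime α β) (n : ℤ) :
    n ∈ Gamma α β ↔ (α:ℤ) * β - α - β - n ∉ Gamma α β := by
  have hβ : 0 < β := by omega
  obtain ⟨a, b, ha0, haβ, hn⟩ := exists_rep hcop hβ n
  have h1 : n ∈ Gamma α β ↔ 0 ≤ b := mem_iff_of_rep hcop hβ ha0 haβ hn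
  have h2 : (α:ℤ) * β - α - β - n ∈ Gamma α β ↔ 0 ≤ (-1 - b) := by
    refine mem_iff_of_rep hcop hβ (a := (β:ℤ) - 1 - a) (by linarith) (by linarith) ?_
    rw [hn]; ring
  rw [h1, h2]; constructor
  · intro hb h; linarith
  · intro h; by_contra hb; exact h (by linarith)


def DSet (α β : ℕ) (I : Finset ℤ) : Set ℤ := ⋃ i ∈ (I : Set ℤ), (fun γ => i + γ) '' Gamma α β

variable {α β : ℕ} {I : Finset ℤ}

lemma mem_DSet {x : ℤ} : x ∈ DSet α β I ↔ ∃ i ∈ I, x - i ∈ Gamma α β := by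
  simp only [DSet, Set.mem_iUnion, Set.mem_image, Finset.mem_coe, exists_prop]
  constructor
  · rintro ⟨i, hi, γ, hγ, rfl⟩
    exact ⟨i, hi, by simpa using hγ⟩
  · rintro ⟨i, hi, hγ⟩
    exact ⟨i, hi, x - i, hγ, by ring⟩

lemma DSet_add {x γ : ℤ} (hx : x ∈ DSet α β I) (hγ : γ ∈ Gamma α β) :
    x + γ ∈ DSet α β I := by
  rw [mem_DSet] at hx ⊢
  obtain ⟨i, hi, hxi⟩ := hx
  exact ⟨i, hi, by have := add_mem hxi hγ; convert this using 1; ring⟩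

lemma lean_diff (hlean : IsLeanSet α β (I : Set ℤ)) {i j : ℤ}
    (hi : i ∈ I) (hj : j ∈ I) (hne : i ≠ j) : i - j ∉ Gamma α β := by
  intro h
  have h0 : 0 ≤ i - j := nonneg h
  rcases eq_or_lt_of_le h0 with h1 | h1
  · exact hne (by linarith)
  · exact hlean.2.2 i (by simpa using hi) j (by simpa using hj) h1 h

lemma minGen_DSet (hlean : IsLeanSet α β (I : Set ℤ)) :
    minGenSet α β (DSet α β I) = (I : Set ℤ) := by
  ext x
  simp only [minGenSet, Set.mem_setOf_eq, Finset.mem_coe]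
  constructor
  · rintro ⟨hx, hmin⟩
    rw [mem_DSet] at hx
    obtain ⟨i, hi, hγ⟩ := hx
    rcases eq_or_ne (x - i) 0 with h | h
    · have : x = i := by linarith [sub_eq_zero.mp h]
      rwa [this]
    · exfalso
      exact hmin (x - i) hγ h (mem_DSet.mpr ⟨i, hi, by simpa using zero_mem⟩)
  · intro hx
    refine ⟨mem_DSet.mpr ⟨x, hx, by simpa using zero_mem⟩, ?_⟩
    intro γ hγ hγ0 hmem
    rw [mem_DSet] at hmem
    obtain ⟨j, hj, hγ'⟩ := hmem
    have hsum : x - j ∈ Gamma α β := by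
      have := add_mem hγ hγ'; convert this using 1; ring
    have hne : x ≠ j := by
      intro h; subst h
      have : x - γ - x = -γ := by ring
      rw [this] at hγ'
      have := nonneg hγ'
      have := pos hγ hγ0
      linarith
    exact lean_diff hlean hx hj hne hsum

lemma mem_Syz_iff (hlean : IsLeanSet α β (I : Set ℤ)) {z : ℤ} :
    z ∈ Syz α β (DSet α β I) ↔
      ∃ i ∈ I, ∃ j ∈ I, i ≠ j ∧ z - i ∈ Gamma α β ∧ z - j ∈ Gamma α β := by
  rw [Syz, minGen_DSet hlean]
  simp only [Set.mem_iUnion, Set.mem_inter_iff, Set.mem_image, Finset.mem_coe, exists_prop]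
  constructor
  · rintro ⟨i, hi, j, hj, hne, ⟨γ, hγ, h1⟩, ⟨γ', hγ', h2⟩⟩
    refine ⟨i, hi, j, hj, hne, ?_, ?_⟩
    · have : z - i = γ := by linarith
      rwa [this]
    · have : z - j = γ' := by linarith
      rwa [this]
  · rintro ⟨i, hi, j, hj, hne, h1, h2⟩
    exact ⟨i, hi, j, hj, hne, ⟨z - i, h1, by ring⟩, ⟨z - j, h2, by ring⟩⟩

lemma mem_dual_iff {c : ℤ} :
    c ∈ dualSet α β (DSet α β I) ↔ ∀ i ∈ I, c + i ∈ Gamma α β := by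
  constructor
  · intro h i hi
    exact h i (mem_DSet.mpr ⟨i, hi, by simpa using zero_mem⟩)
  · intro h x hx
    rw [mem_DSet] at hx
    obtain ⟨i, hi, hγ⟩ := hx
    have := add_mem (h i hi) hγ
    convert this using 1; ring


lemma notMem_DSet {x : ℤ} : x ∉ DSet α β I ↔ ∀ i ∈ I, x - i ∉ Gamma α β := by
  rw [mem_DSet]; push_neg; rfl


lemma αne (hα : 2 ≤ α) : (α:ℤ) ≠ 0 := by
  have : (0:ℤ) < α := by exact_mod_cast Nat.lt_of_lt_of_le Nat.zero_lt_two hα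
  exact ne_of_gt this

lemma βne (hα : 2 ≤ α) (hαβ : α < β) : (β:ℤ) ≠ 0 := by
  have : (0:ℤ) < β := by
    exact_mod_cast Nat.lt_of_lt_of_le (Nat.lt_of_lt_of_le Nat.zero_lt_two hα) (le_of_lt hαβ)
  exact ne_of_gt this

/-- dual membership via symmetry -/
lemma mem_dual_iff' (hα : 2 ≤ α) (hαβ : α < β) (hcop : Nat.Coprime α β) (c : ℤ) :
    c ∈ dualSet α β (DSet α β I) ↔ ((α:ℤ)*β - α - β - c) ∉ DSet α β I := by
  rw [mem_dual_iff, notMem_DSet]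
  refine forall₂_congr fun i _ => ?_
  rw [symmetry hα hαβ hcop (c + i)]
  have e : (α:ℤ)*β - α - β - (c + i) = (α:ℤ)*β - α - β - c - i := by ring
  rw [e]

lemma dual_add {c γ : ℤ} (hc : c ∈ dualSet α β (DSet α β I)) (hγ : γ ∈ Gamma α β) :
    c + γ ∈ dualSet α β (DSet α β I) := by
  rw [mem_dual_iff] at hc ⊢
  intro i hi
  have := add_mem (hc i hi) hγ
  have e : c + i + γ = c + γ + i := by ring
  rwa [e] at this

lemma Syz_add (hlean : IsLeanSet α β (I : Set ℤ)) {z γ : ℤ}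
    (hz : z ∈ Syz α β (DSet α β I)) (hγ : γ ∈ Gamma α β) :
    z + γ ∈ Syz α β (DSet α β I) := by
  rw [mem_Syz_iff hlean] at hz ⊢
  obtain ⟨i, hi, j, hj, hne, h1, h2⟩ := hz
  refine ⟨i, hi, j, hj, hne, ?_, ?_⟩
  · have := add_mem h1 hγ
    have e : z - i + γ = z + γ - i := by ring
    rwa [e] at this
  · have := add_mem h2 hγ
    have e : z - j + γ = z + γ - j := by ring
    rwa [e] at this

/-- characterization of minimal generators of the dual -/
lemma mem_minGen_dual_iff (hα : 2 ≤ α) (hαβ : α < β) (hcop : Nat.Coprime α β) (c : ℤ) :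
    c ∈ minGenSet α β (dualSet α β (DSet α β I)) ↔
      (((α:ℤ)*β - α - β - c) ∉ DSet α β I ∧
       ((α:ℤ)*β - β - c) ∈ DSet α β I ∧
       ((α:ℤ)*β - α - c) ∈ DSet α β I) := by
  simp only [minGenSet, Set.mem_setOf_eq]
  constructor
  · rintro ⟨hc, hmin⟩
    refine ⟨(mem_dual_iff' hα hαβ hcop c).mp hc, ?_, ?_⟩
    · have h := hmin (α:ℤ) alpha_mem (αne hα)
      have h' : (α:ℤ)*β - α - β - (c - α) ∈ DSet α β I := by
        by_contra hh
        exact h ((mem_dual_iff' hα hαβ hcop _).mpr hh)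
      have e : (α:ℤ)*β - α - β - (c - α) = (α:ℤ)*β - β - c := by ring
      rwa [e] at h'
    · have h := hmin (β:ℤ) beta_mem (βne hα hαβ)
      have h' : (α:ℤ)*β - α - β - (c - β) ∈ DSet α β I := by
        by_contra hh
        exact h ((mem_dual_iff' hα hαβ hcop _).mpr hh)
      have e : (α:ℤ)*β - α - β - (c - β) = (α:ℤ)*β - α - c := by ring
      rwa [e] at h'
  · rintro ⟨h1, h2, h3⟩
    refine ⟨(mem_dual_iff' hα hαβ hcop c).mpr h1, ?_⟩
    intro γ hγ hγ0 hmem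
    rcases decomp hγ hγ0 with hd | hd
    · have hmem' : c - α ∈ dualSet α β (DSet α β I) := by
        have := dual_add hmem hd
        have e : c - γ + (γ - α) = c - α := by ring
        rwa [e] at this
      rw [mem_dual_iff' hα hαβ hcop] at hmem'
      apply hmem'
      have e : (α:ℤ)*β - α - β - (c - α) = (α:ℤ)*β - β - c := by ring
      rwa [e]
    · have hmem' : c - β ∈ dualSet α β (DSet α β I) := by
        have := dual_add hmem hd
        have e : c - γ + (γ - β) = c - β := by ring
        rwa [e] at this
      rw [mem_dual_iff' hα hαβ hcop] at hmem'
      apply hmem'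
      have e : (α:ℤ)*β - α - β - (c - β) = (α:ℤ)*β - α - c := by ring
      rwa [e]

/-- characterization of minimal generators of the syzygy -/
lemma mem_minGen_Syz_iff (hα : 2 ≤ α) (hαβ : α < β) (hlean : IsLeanSet α β (I : Set ℤ))
    (z : ℤ) :
    z ∈ minGenSet α β (Syz α β (DSet α β I)) ↔
      (z ∈ Syz α β (DSet α β I) ∧ z - α ∉ Syz α β (DSet α β I) ∧
        z - β ∉ Syz α β (DSet α β I)) := by
  simp only [minGenSet, Set.mem_setOf_eq]
  constructor
  · rintro ⟨hz, hmin⟩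
    exact ⟨hz, hmin (α:ℤ) alpha_mem (αne hα), hmin (β:ℤ) beta_mem (βne hα hαβ)⟩
  · rintro ⟨hz, h1, h2⟩
    refine ⟨hz, ?_⟩
    intro γ hγ hγ0 hmem
    rcases decomp hγ hγ0 with hd | hd
    · apply h1
      have := Syz_add hlean hmem hd
      have e : z - γ + (γ - α) = z - α := by ring
      rwa [e] at this
    · apply h2
      have := Syz_add hlean hmem hd
      have e : z - γ + (γ - β) = z - β := by ring
      rwa [e] at this


lemma key (hα : 2 ≤ α) (hαβ : α < β) (hcop : Nat.Coprime α β)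
    (hlean : IsLeanSet α β (I : Set ℤ)) (hcard : 2 ≤ I.card) (w : ℤ) :
    (w ∉ DSet α β I ∧ w + α ∈ DSet α β I ∧ w + β ∈ DSet α β I) ↔
      (w + α + β ∈ Syz α β (DSet α β I) ∧ w + β ∉ Syz α β (DSet α β I) ∧
        w + α ∉ Syz α β (DSet α β I)) := by
  constructor
  · rintro ⟨hw, hwa, hwb⟩
    rw [notMem_DSet] at hw
    obtain ⟨i, hi, hgi⟩ := mem_DSet.mp hwa
    obtain ⟨j, hj, hgj⟩ := mem_DSet.mp hwb
    have hij : i ≠ j := by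
      rintro rfl
      have h1 : (w + (α:ℤ) - i) - α ∉ Gamma α β := by
        have := hw i hi
        have e : (w + (α:ℤ) - i) - α = w - i := by ring
        rwa [e]
      obtain ⟨q, hq⟩ := sub_alpha hgi h1
      have h2 : (w + (β:ℤ) - i) - β ∉ Gamma α β := by
        have := hw i hi
        have e : (w + (β:ℤ) - i) - β = w - i := by ring
        rwa [e]
      obtain ⟨p, hp⟩ := sub_beta hgj h2
      have hco : IsCoprime (α:ℤ) (β:ℤ) := Nat.isCoprime_iff_coprime.mpr hcop
      have hdvd : (α:ℤ) ∣ ((q:ℤ) + 1) :=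
        hco.dvd_of_dvd_mul_right ⟨(p:ℤ) + 1, by linarith⟩
      obtain ⟨k, hk⟩ := hdvd
      have hαpos : (0:ℤ) < α := by exact_mod_cast (by omega : 0 < α)
      have hβpos : (0:ℤ) < β := by exact_mod_cast (by omega : 0 < β)
      have hk1 : 1 ≤ k := by nlinarith [Int.natCast_nonneg q]
      obtain ⟨j', hj', hj'i⟩ := Finset.exists_mem_ne (s := I) (by omega : 1 < I.card) i
      have hj'I : j' ∈ I := hj'
      have hmul : ((k:ℤ) - 1) * β * α ∈ Gamma α β := by
        refine ⟨(((k:ℤ) - 1) * β).toNat, 0, ?_⟩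
        have hnn : (0:ℤ) ≤ ((k:ℤ) - 1) * β := mul_nonneg (by linarith) (by linarith)
        rw [Int.toNat_of_nonneg hnn]
        ring
      have hwj' : w - j' ∈ Gamma α β := by
        rw [symmetry hα hαβ hcop]
        intro hF
        have hj'i' : j' - i ∈ Gamma α β := by
          have hsum := add_mem hF hmul
          have e : ((α:ℤ) * β - α - β - (w - j')) + ((k:ℤ) - 1) * β * α = j' - i := by
            linear_combination (-1 : ℤ) * hq - (β:ℤ) * hk
          rwa [e] at hsum
        exact lean_diff hlean hj'I hi hj'i hj'i'
      exact hw j' hj'I hwj'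
    refine ⟨?_, ?_, ?_⟩
    · rw [mem_Syz_iff hlean]
      refine ⟨i, hi, j, hj, hij, ?_, ?_⟩
      · have := add_mem hgi (beta_mem (α := α))
        have e : w + (α:ℤ) - i + β = w + α + β - i := by ring
        rwa [e] at this
      · have := add_mem hgj (alpha_mem (β := β))
        have e : w + (β:ℤ) - j + α = w + α + β - j := by ring
        rwa [e] at this
    · intro hS
      obtain ⟨k, hk, l, hl, hkl, h1, h2⟩ := (mem_Syz_iff hlean).mp hS
      have e1 : (w + (β:ℤ) - k) - β ∉ Gamma α β := by
        have := hw k hk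
        have e : (w + (β:ℤ) - k) - β = w - k := by ring
        rwa [e]
      obtain ⟨p, hp⟩ := sub_beta h1 e1
      have e2 : (w + (β:ℤ) - l) - β ∉ Gamma α β := by
        have := hw l hl
        have e : (w + (β:ℤ) - l) - β = w - l := by ring
        rwa [e]
      obtain ⟨p', hp'⟩ := sub_beta h2 e2
      rcases lt_trichotomy p p' with h | h | h
      · refine lean_diff hlean hk hl hkl ⟨p' - p, 0, ?_⟩
        have hc : ((p' - p : ℕ) : ℤ) = (p' : ℤ) - p := by
          have : p ≤ p' := le_of_lt h
          push_cast [this]; ring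
        rw [hc]; push_cast; linarith
      · exact hkl (by rw [h] at hp; linarith)
      · refine lean_diff hlean hl hk (Ne.symm hkl) ⟨p - p', 0, ?_⟩
        have hc : ((p - p' : ℕ) : ℤ) = (p : ℤ) - p' := by
          have : p' ≤ p := le_of_lt h
          push_cast [this]; ring
        rw [hc]; push_cast; linarith
    · intro hS
      obtain ⟨k, hk, l, hl, hkl, h1, h2⟩ := (mem_Syz_iff hlean).mp hS
      have e1 : (w + (α:ℤ) - k) - α ∉ Gamma α β := by
        have := hw k hk
        have e : (w + (α:ℤ) - k) - α = w - k := by ring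
        rwa [e]
      obtain ⟨q, hq⟩ := sub_alpha h1 e1
      have e2 : (w + (α:ℤ) - l) - α ∉ Gamma α β := by
        have := hw l hl
        have e : (w + (α:ℤ) - l) - α = w - l := by ring
        rwa [e]
      obtain ⟨q', hq'⟩ := sub_alpha h2 e2
      rcases lt_trichotomy q q' with h | h | h
      · refine lean_diff hlean hk hl hkl ⟨0, q' - q, ?_⟩
        have hc : ((q' - q : ℕ) : ℤ) = (q' : ℤ) - q := by
          have : q ≤ q' := le_of_lt h
          push_cast [this]; ring
        rw [hc]; push_cast; linarith
      · exact hkl (by rw [h] at hq; linarith)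
      · refine lean_diff hlean hl hk (Ne.symm hkl) ⟨0, q - q', ?_⟩
        have hc : ((q - q' : ℕ) : ℤ) = (q : ℤ) - q' := by
          have : q' ≤ q := le_of_lt h
          push_cast [this]; ring
        rw [hc]; push_cast; linarith
  · rintro ⟨hzS, hza, hzb⟩
    obtain ⟨i, hi, j, hj, hij, hgi, hgj⟩ := (mem_Syz_iff hlean).mp hzS
    have hwb : w + (β:ℤ) ∈ DSet α β I := by
      by_contra hcon
      rw [notMem_DSet] at hcon
      have d1 : (w + (α:ℤ) + β - i) - α ∉ Gamma α β := by
        have := hcon i hi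
        have e : (w + (α:ℤ) + β - i) - α = w + β - i := by ring
        rwa [e]
      obtain ⟨q, hq⟩ := sub_alpha hgi d1
      have d2 : (w + (α:ℤ) + β - j) - α ∉ Gamma α β := by
        have := hcon j hj
        have e : (w + (α:ℤ) + β - j) - α = w + β - j := by ring
        rwa [e]
      obtain ⟨q', hq'⟩ := sub_alpha hgj d2
      rcases lt_trichotomy q q' with h | h | h
      · refine lean_diff hlean hi hj hij ⟨0, q' - q, ?_⟩
        have hc : ((q' - q : ℕ) : ℤ) = (q' : ℤ) - q := by
          have : q ≤ q' := le_of_lt h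
          push_cast [this]; ring
        rw [hc]; push_cast; linarith
      · exact hij (by rw [h] at hq; linarith)
      · refine lean_diff hlean hj hi (Ne.symm hij) ⟨0, q - q', ?_⟩
        have hc : ((q - q' : ℕ) : ℤ) = (q : ℤ) - q' := by
          have : q' ≤ q := le_of_lt h
          push_cast [this]; ring
        rw [hc]; push_cast; linarith
    have hwa : w + (α:ℤ) ∈ DSet α β I := by
      by_contra hcon
      rw [notMem_DSet] at hcon
      have d1 : (w + (α:ℤ) + β - i) - β ∉ Gamma α β := by
        have := hcon i hi
        have e : (w + (α:ℤ) + β - i) - β = w + α - i := by ring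
        rwa [e]
      obtain ⟨p, hp⟩ := sub_beta hgi d1
      have d2 : (w + (α:ℤ) + β - j) - β ∉ Gamma α β := by
        have := hcon j hj
        have e : (w + (α:ℤ) + β - j) - β = w + α - j := by ring
        rwa [e]
      obtain ⟨p', hp'⟩ := sub_beta hgj d2
      rcases lt_trichotomy p p' with h | h | h
      · refine lean_diff hlean hi hj hij ⟨p' - p, 0, ?_⟩
        have hc : ((p' - p : ℕ) : ℤ) = (p' : ℤ) - p := by
          have : p ≤ p' := le_of_lt h
          push_cast [this]; ring
        rw [hc]; push_cast; linarith
      · exact hij (by rw [h] at hp; linarith)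
      · refine lean_diff hlean hj hi (Ne.symm hij) ⟨p - p', 0, ?_⟩
        have hc : ((p - p' : ℕ) : ℤ) = (p : ℤ) - p' := by
          have : p' ≤ p := le_of_lt h
          push_cast [this]; ring
        rw [hc]; push_cast; linarith
    have hwD : w ∉ DSet α β I := by
      intro hwD
      obtain ⟨k, hk, hwk⟩ := mem_DSet.mp hwD
      have core : ∀ m ∈ I, ∀ n ∈ I, m ≠ n → m ≠ k →
          w + (α:ℤ) + β - m ∈ Gamma α β → w + (α:ℤ) + β - n ∈ Gamma α β → False := by
        intro m hm n hn hmn hmk hgm hgn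
        have hA : (w + (α:ℤ) + β - m) - α ∉ Gamma α β := by
          intro hA'
          apply hza
          rw [mem_Syz_iff hlean]
          refine ⟨m, hm, k, hk, hmk, ?_, ?_⟩
          · have e : w + (β:ℤ) - m = (w + (α:ℤ) + β - m) - α := by ring
            rwa [e]
          · have e : w + (β:ℤ) - k = (w - k) + β := by ring
            rw [e]; exact add_mem hwk beta_mem
        have hB : (w + (α:ℤ) + β - m) - β ∉ Gamma α β := by
          intro hB'
          apply hzb
          rw [mem_Syz_iff hlean]
          refine ⟨m, hm, k, hk, hmk, ?_, ?_⟩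
          · have e : w + (α:ℤ) - m = (w + (α:ℤ) + β - m) - β := by ring
            rwa [e]
          · have e : w + (α:ℤ) - k = (w - k) + α := by ring
            rw [e]; exact add_mem hwk alpha_mem
        rcases eq_or_ne (w + (α:ℤ) + β - m) 0 with h0 | h0
        · refine lean_diff hlean hm hn hmn ?_
          have e : m - n = w + (α:ℤ) + β - n := by linarith
          rw [e]; exact hgn
        · rcases decomp hgm h0 with h | h
          · exact hA h
          · exact hB h
      rcases eq_or_ne i k with hik | hik
      · have hjk : j ≠ k := by rw [← hik]; exact Ne.symm hij
        exact core j hj i hi (Ne.symm hij) hjk hgj hgi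
      · exact core i hi j hj hij hik hgi hgj
    exact ⟨hwD, hwa, hwb⟩


end GP

/-- For a lean set `I = {0, i₁, …, iₙ}` with `n ≥ 1` and `Δ_I = ⋃_{i∈I}(i + Γ)`,
the map `x ↦ αβ - x` is a bijection from the minimal system of generators of
`Δ_I*` onto the minimal system of generators of `Syz(Δ_I)`. -/
theorem dualGens_bijOn_syzygyGens (α β : ℕ)
    (hα : 2 ≤ α) (hαβ : α < β) (hcop : Nat.Coprime α β)
    (I : Finset ℤ) (h0 : (0 : ℤ) ∈ I) (hcard : 2 ≤ I.card)
    (hlean : IsLeanSet α β (I : Set ℤ)) :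
    Set.BijOn (fun x => (α : ℤ) * β - x)
      (minGenSet α β (dualSet α β (⋃ i ∈ (I : Set ℤ), (fun γ => i + γ) '' Gamma α β)))
      (minGenSet α β (Syz α β (⋃ i ∈ (I : Set ℤ), (fun γ => i + γ) '' Gamma α β))) := by
  classical
  have hD : (⋃ i ∈ (I : Set ℤ), (fun γ => i + γ) '' Gamma α β) = GP.DSet α β I := rfl
  rw [hD]
  have hAB : ∀ c : ℤ, c ∈ minGenSet α β (dualSet α β (GP.DSet α β I)) ↔
      ((α:ℤ) * β - c) ∈ minGenSet α β (Syz α β (GP.DSet α β I)) := by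
    intro c
    rw [GP.mem_minGen_dual_iff hα hαβ hcop, GP.mem_minGen_Syz_iff hα hαβ hlean]
    have hkey := GP.key hα hαβ hcop hlean hcard ((α:ℤ) * β - α - β - c)
    have e1 : (α:ℤ) * β - β - c = (α:ℤ) * β - α - β - c + α := by ring
    have e2 : (α:ℤ) * β - α - c = (α:ℤ) * β - α - β - c + β := by ring
    have e3 : (α:ℤ) * β - c = (α:ℤ) * β - α - β - c + α + β := by ring
    have e4 : (α:ℤ) * β - α - β - c + α + β - α = (α:ℤ) * β - α - β - c + β := by ring
    have e5 : (α:ℤ) * β - α - β - c + α + β - β = (α:ℤ) * β - α - β - c + α := by ring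
    rw [e1, e2, e3, e4, e5]
    exact hkey
  refine ⟨fun c hc => (hAB c).mp hc, ?_, ?_⟩
  · intro x _ y _ h
    have h' : (α:ℤ) * β - x = (α:ℤ) * β - y := h
    linarith
  · intro z hz
    refine ⟨(α:ℤ) * β - z, (hAB _).mpr ?_, ?_⟩
    · have e : (α:ℤ) * β - ((α:ℤ) * β - z) = z := by ring
      rw [e]; exact hz
    · show (α:ℤ) * β - ((α:ℤ) * β - z) = z
      ring
end

section
/- Let Γ = ⟨α, β⟩ with α, β coprime, 2 ≤ α < β, and let Δ be a Γ-semimodule whose minimal system of generators has at least 2 elements. Then Syz((Syz(Δ))*) is isomorphic to Δ*, i.e. there exists c ∈ ℤ such that Syz((Syz(Δ))*) = c + Δ*. -/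
/-!
Write integers as `s * β - b * α`. Since `⟨α, β⟩` is symmetric (`z ∈ Γ ↔ F - z ∉ Γ` for the
Frobenius number `F = αβ - α - β`), the dual of a semimodule `X` is `F - (ℤ \ X)`, so duality is
an involution, and `z ∈ (Syz Δ)*` iff `z + x ∉ Γ` for at most one minimal generator `x` of `Δ`.
Listing the minimal generators of `Δ` as a staircase `A j * β - B j * α` (`A`, `B` increasing,
`(A, B) (j + n) = (A, B) j + (α, β)`), this condition shows that `(Syz Δ)*` is generated by the
reflected staircase `B (j + n - 2) * α - A j * β`. Reflecting twice gives back `Δ`, so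
`(Syz (Syz Δ)*)* = Δ`, and dualizing gives `Syz (Syz Δ)* = Δ*`, with shift `c = 0`.
-/

open Set

namespace Gamma

def frobenius (α β : ℕ) : ℤ := α * β - α - β

variable {α β : ℕ}

theorem zero_mem : (0 : ℤ) ∈ Gamma α β := ⟨0, 0, by simp⟩

theorem nonneg_s17 {x : ℤ} (hx : x ∈ Gamma α β) : 0 ≤ x := by
  obtain ⟨p, q, rfl⟩ := hx
  positivity

theorem add_mem_s17 {x y : ℤ} (hx : x ∈ Gamma α β) (hy : y ∈ Gamma α β) : x + y ∈ Gamma α β := by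
  obtain ⟨p, q, rfl⟩ := hx
  obtain ⟨p', q', rfl⟩ := hy
  exact ⟨p + p', q + q', by push_cast; ring⟩

theorem mul_add_mul_mem {p q : ℤ} (hp : 0 ≤ p) (hq : 0 ≤ q) : p * α + q * β ∈ Gamma α β :=
  ⟨p.toNat, q.toNat, by rw [Int.toNat_of_nonneg hp, Int.toNat_of_nonneg hq]⟩

variable (hα : 0 < α) (hcop : Nat.Coprime α β)
include hα hcop

theorem mul_sub_mul_mem_iff (a b : ℤ) : a * β - b * α ∈ Gamma α β ↔ b ≤ β * (a / α) := by
  have hα' : (0 : ℤ) < α := by exact_mod_cast hα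
  constructor
  · rintro ⟨p, q, hpq⟩
    obtain ⟨k, hk⟩ : (α : ℤ) ∣ a - q :=
      (Nat.isCoprime_iff_coprime.mpr hcop).dvd_of_dvd_mul_right ⟨b + p, by linarith⟩
    have hbp : b + p = β * k := by
      have : (α : ℤ) * (β * k) = α * (b + p) := by linear_combination hpq - (β : ℤ) * hk
      exact (mul_left_cancel₀ hα'.ne' this).symm
    have hdiv : a / α = q / α + k := by
      rw [show a = q + k * α by linarith]
      exact Int.add_mul_ediv_right _ _ hα'.ne'
    have : k ≤ a / α := by rw [hdiv]; linarith [Int.ediv_nonneg (Nat.cast_nonneg q) hα'.le]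
    nlinarith [mul_le_mul_of_nonneg_left this (Nat.cast_nonneg β : (0 : ℤ) ≤ β)]
  · intro hb
    have : a * β - b * α = (β * (a / α) - b) * α + (a % α) * β := by
      linear_combination (-(β : ℤ)) * Int.mul_ediv_add_emod a α
    rw [this]
    exact mul_add_mul_mem (by linarith) (Int.emod_nonneg a hα'.ne')

theorem exists_eq_mul_sub_mul (z : ℤ) : ∃ s b : ℤ, 0 ≤ s ∧ s < α ∧ z = s * β - b * α := by
  obtain ⟨u, v, huv⟩ := Nat.isCoprime_iff_coprime.mpr hcop
  have hα' : (0 : ℤ) < α := by exact_mod_cast hα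
  refine ⟨z * v % α, -(z * u + z * v / α * β), Int.emod_nonneg _ hα'.ne',
    Int.emod_lt_of_pos _ hα', ?_⟩
  linear_combination (-z) * huv - (β : ℤ) * Int.mul_ediv_add_emod (z * v) α

theorem sub_mem_iff_of_lt {s s' b b' : ℤ} (h : s < s') (h' : s' < s + α) :
    (s' * β - b' * α) - (s * β - b * α) ∈ Gamma α β ↔ b' ≤ b := by
  rw [show (s' * β - b' * α) - (s * β - b * α) = (s' - s) * β - (b' - b) * α by ring,
    mul_sub_mul_mem_iff hα hcop, Int.ediv_eq_zero_of_lt (by omega) (by omega)]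
  omega

theorem sub_mem_iff_of_lt' {s s' b b' : ℤ} (h : s < s') (h' : s' < s + α) :
    (s * β - b * α) - (s' * β - b' * α) ∈ Gamma α β ↔ b + β ≤ b' := by
  rw [show (s * β - b * α) - (s' * β - b' * α) = (s - s' + α) * β - (b - b' + β) * α by ring,
    mul_sub_mul_mem_iff hα hcop, Int.ediv_eq_zero_of_lt (by omega) (by omega)]
  omega

theorem mem_iff_frobenius_sub_not_mem (z : ℤ) : z ∈ Gamma α β ↔ frobenius α β - z ∉ Gamma α β := by
  obtain ⟨s, b, hs0, hsα, rfl⟩ := exists_eq_mul_sub_mul hα hcop z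
  rw [show frobenius α β - (s * β - b * α) = (α - 1 - s) * β - (1 - b) * α by
      unfold frobenius; ring, mul_sub_mul_mem_iff hα hcop, mul_sub_mul_mem_iff hα hcop,
    Int.ediv_eq_zero_of_lt hs0 hsα, Int.ediv_eq_zero_of_lt (by omega) (by omega)]
  omega

theorem frobenius_not_mem : frobenius α β ∉ Gamma α β := by
  simpa using (mem_iff_frobenius_sub_not_mem hα hcop 0).mp zero_mem

end Gamma

section Duality

variable {α β : ℕ}

theorem add_mem_dualSet (X : Set ℤ) :
    ∀ c ∈ dualSet α β X, ∀ γ ∈ Gamma α β, c + γ ∈ dualSet α β X := by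
  intro c hc γ hγ x hx
  rw [add_right_comm]
  exact Gamma.add_mem_s17 (hc x hx) hγ

variable (hα : 0 < α) (hcop : Nat.Coprime α β)
include hα hcop

theorem mem_dualSet_iff_s17 {X : Set ℤ} (hX : ∀ x ∈ X, ∀ γ ∈ Gamma α β, x + γ ∈ X) (z : ℤ) :
    z ∈ dualSet α β X ↔ Gamma.frobenius α β - z ∉ X := by
  constructor
  · intro hz hFz
    simpa using Gamma.frobenius_not_mem hα hcop (by simpa using hz _ hFz)
  · intro hFz x hx
    by_contra hzx
    have := hX x hx _ ((Gamma.mem_iff_frobenius_sub_not_mem hα hcop _).not_left.mp hzx)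
    exact hFz (by convert this using 1; ring)

theorem dualSet_dualSet {X : Set ℤ} (hX : ∀ x ∈ X, ∀ γ ∈ Gamma α β, x + γ ∈ X) :
    dualSet α β (dualSet α β X) = X := by
  ext z
  rw [mem_dualSet_iff_s17 hα hcop (add_mem_dualSet X), mem_dualSet_iff_s17 hα hcop hX, sub_sub_cancel,
    not_not]

end Duality

section Syzygy

variable {α β : ℕ} {Δ : Set ℤ}

theorem mem_Syz_iff {z : ℤ} :
    z ∈ Syz α β Δ ↔ ∃ i ∈ minGenSet α β Δ, ∃ j ∈ minGenSet α β Δ,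
      i ≠ j ∧ z - i ∈ Gamma α β ∧ z - j ∈ Gamma α β := by
  simp only [Syz, mem_iUnion, mem_inter_iff, mem_image, exists_prop]
  constructor
  · rintro ⟨i, hi, j, hj, hij, ⟨γ, hγ, rfl⟩, ⟨γ', hγ', hγγ'⟩⟩
    exact ⟨i, hi, j, hj, hij, by simpa using hγ, by simpa [← hγγ'] using hγ'⟩
  · rintro ⟨i, hi, j, hj, hij, hzi, hzj⟩
    exact ⟨i, hi, j, hj, hij, ⟨z - i, hzi, by ring⟩, ⟨z - j, hzj, by ring⟩⟩

theorem add_mem_Syz : ∀ x ∈ Syz α β Δ, ∀ γ ∈ Gamma α β, x + γ ∈ Syz α β Δ := by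
  intro x hx γ hγ
  obtain ⟨i, hi, j, hj, hij, hxi, hxj⟩ := mem_Syz_iff.mp hx
  refine mem_Syz_iff.mpr ⟨i, hi, j, hj, hij, ?_, ?_⟩ <;> rw [add_sub_right_comm]
  exacts [Gamma.add_mem_s17 hxi hγ, Gamma.add_mem_s17 hxj hγ]

theorem eq_of_sub_mem_of_mem_minGenSet {x y : ℤ} (hx : x ∈ minGenSet α β Δ)
    (hy : y ∈ minGenSet α β Δ) (hxy : x - y ∈ Gamma α β) : x = y := by
  by_contra hne
  exact hx.2 (x - y) hxy (sub_ne_zero.mpr hne) (by simpa using hy.1)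

theorem exists_mem_minGenSet_sub_mem (hbdd : ∃ m : ℤ, ∀ x ∈ Δ, m ≤ x) {x : ℤ} (hx : x ∈ Δ) :
    ∃ g ∈ minGenSet α β Δ, x - g ∈ Gamma α β := by
  obtain ⟨m, hm⟩ := hbdd
  obtain ⟨g, ⟨hgΔ, hxg⟩, hleast⟩ :=
    Int.exists_least_of_bdd (P := fun y => y ∈ Δ ∧ x - y ∈ Gamma α β)
      ⟨m, fun y hy => hm y hy.1⟩ ⟨x, hx, by simpa using Gamma.zero_mem⟩
  refine ⟨g, ⟨hgΔ, fun γ hγ hγ0 hgγ => hγ0 (le_antisymm ?_ (Gamma.nonneg_s17 hγ))⟩, hxg⟩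
  have hxgγ : x - (g - γ) ∈ Gamma α β := by
    rw [sub_sub_eq_add_sub, add_sub_right_comm]
    exact Gamma.add_mem_s17 hxg hγ
  linarith [hleast (g - γ) ⟨hgγ, hxgγ⟩]

theorem eq_of_mul_sub_mul_mem_minGenSet (hα : 0 < α) {s b b' : ℤ}
    (hx : s * β - b * α ∈ minGenSet α β Δ) (hy : s * β - b' * α ∈ minGenSet α β Δ) : b = b' := by
  have hα' : (α : ℤ) ≠ 0 := by exact_mod_cast hα.ne'
  wlog hbb' : b ≤ b' generalizing b b'
  · exact (this hy hx (by omega)).symm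
  have : (s * β - b * α) - (s * β - b' * α) ∈ Gamma α β := by
    simpa [sub_mul] using Gamma.mul_add_mul_mem (sub_nonneg.mpr hbb') le_rfl (α := α) (β := β)
  have := eq_of_sub_mem_of_mem_minGenSet hx hy this
  exact mul_right_cancel₀ hα' (by linarith)

theorem mem_dualSet_Syz_iff (hα : 0 < α) (hcop : Nat.Coprime α β) (z : ℤ) :
    z ∈ dualSet α β (Syz α β Δ) ↔ ∀ x ∈ minGenSet α β Δ, ∀ y ∈ minGenSet α β Δ,
      z + x ∉ Gamma α β → z + y ∉ Gamma α β → x = y := by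
  have hsymm : ∀ x, Gamma.frobenius α β - z - x ∈ Gamma α β ↔ z + x ∉ Gamma α β := fun x => by
    rw [Gamma.mem_iff_frobenius_sub_not_mem hα hcop (z + x), sub_sub, not_not]
  simp only [mem_dualSet_iff_s17 hα hcop add_mem_Syz, mem_Syz_iff, hsymm, not_exists, not_and]
  exact forall₂_congr fun x _ => forall₂_congr fun y _ => by tauto

end Syzygy

section QuasiPeriodic

theorem map_add_mul_of_map_add {f : ℤ → ℤ} {p c : ℤ} (h : ∀ j, f (j + p) = f j + c) (k j : ℤ) :
    f (j + k * p) = f j + k * c := by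
  induction k using Int.induction_on generalizing j with
  | zero => simp
  | succ k ih => rw [add_one_mul, ← add_assoc, h, ih]; ring
  | pred k ih =>
    have := h (j + (-k - 1) * p)
    rw [show j + (-k - 1) * p + p = j + -k * p by ring, ih] at this
    linarith

theorem exists_add_mul_mem_Ico {n : ℤ} (hn : 0 < n) (a j : ℤ) :
    ∃ k : ℤ, j + k * n ∈ Ico a (a + n) :=
  ⟨-toIcoDiv hn a j, by
    simpa [← self_sub_toIcoDiv_zsmul, sub_eq_add_neg] using toIcoMod_mem_Ico hn a j⟩

variable {n : ℕ} {f B : ℤ → ℤ} {c d : ℤ}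

/-- Take `j` with `f (j - n) < f (j - n + 1)`: then `f` is constant on `[j - n + 1, j]`. -/
theorem exists_consecutive_lt (hn : 2 ≤ n) (hf : Monotone f) (hfn : ∀ j, f (j + n) = f j + 1)
    (hB : Monotone B) (h : ∀ i, d * f i < c + B (i + n - 2)) :
    ∃ j, d * f (j - 1) < c + B (j - 1) ∧ d * f j < c + B j := by
  obtain ⟨j, hj⟩ : ∃ j, f j < f (j + 1) := by
    by_contra! hconst
    have := antitone_int_of_succ_le hconst (show (0 : ℤ) ≤ n by positivity)
    linarith [zero_add (n : ℤ) ▸ hfn 0]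
  have hfj : f (j + 1) = f (j + n) := le_antisymm (hf (by omega)) (by linarith [hfn j])
  have hfj' : f (j + n - 1) = f (j + n) :=
    le_antisymm (hf (by omega)) (hfj ▸ hf (by omega))
  have hj1 := h (j + 1)
  rw [show j + 1 + n - 2 = j + n - 1 by ring] at hj1
  refine ⟨j + n, ?_, ?_⟩
  · rwa [hfj', ← hfj]
  · rw [← hfj]
    linarith [hB (show j + n - 1 ≤ j + n by omega)]

/-- The hypothesis at `i₀` propagates by monotonicity to `c + B i ≤ d * f i` for
`i ∈ [i₀, i₀ + n - 2]`, and the strict inequality is invariant under `j ↦ j + n`. -/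
theorem exists_add_mul_eq_of_lt (hn : 0 < n) (hd : 0 ≤ d) (hf : Monotone f)
    (hfn : ∀ j, f (j + n) = f j + 1) (hB : Monotone B) (hBn : ∀ j, B (j + n) = B j + d)
    {i₀ j : ℤ} (h₀ : c + B (i₀ + n - 2) ≤ d * f i₀) (hj : d * f j < c + B j) :
    ∃ k : ℤ, j + k * n = i₀ + n - 1 := by
  obtain ⟨k, hk₁, hk₂⟩ := exists_add_mul_mem_Ico (by positivity : (0 : ℤ) < n) i₀ j
  refine ⟨k, le_antisymm (by omega) (not_lt.mp fun hlt => ?_)⟩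
  have hfk : d * f i₀ ≤ d * f (j + k * n) := mul_le_mul_of_nonneg_left (hf hk₁) hd
  have hBk : B (j + k * n) ≤ B (i₀ + n - 2) := hB (by omega)
  rw [map_add_mul_of_map_add hfn, mul_add] at hfk
  rw [map_add_mul_of_map_add hBn] at hBk
  linarith

end QuasiPeriodic

theorem Set.Finite.exists_enum_strictMono_comp {ι κ : Type*} [LinearOrder κ] {E : Set ι}
    (hE : E.Finite) {f : ι → κ} (hf : InjOn f E) :
    ∃ e : Fin E.ncard → ι, range e = E ∧ StrictMono (f ∘ e) := by
  set T := (hE.image f).toFinset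
  have hT : T.card = E.ncard := by
    rw [← ncard_coe_finset, Finite.coe_toFinset, hf.ncard_image]
  have hmem : ∀ k, ∃ x ∈ E, f x = T.orderEmbOfFin hT k := fun k => by
    have := T.orderEmbOfFin_mem hT k
    simpa only [T, Finite.mem_toFinset, mem_image] using this
  choose e heE hfe using hmem
  refine ⟨e, (range_subset_iff.mpr heE).antisymm fun x hx => ?_, fun j k hjk => ?_⟩
  · obtain ⟨k, hk⟩ : f x ∈ range (T.orderEmbOfFin hT) := by
      rw [Finset.range_orderEmbOfFin]
      simpa [T] using mem_image_of_mem f hx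
    exact ⟨k, hf (heE k) hx (by rw [hfe, hk])⟩
  · simpa only [Function.comp, hfe] using (T.orderEmbOfFin hT).strictMono hjk

section PeriodicExtension

variable {n : ℕ} (hn : 0 < n)

def periodicExtension (g : Fin n → ℤ) (c j : ℤ) : ℤ :=
  g ⟨(j % n).toNat, by have := Int.emod_lt_of_pos j (Int.natCast_pos.mpr hn); omega⟩ + c * (j / n)

theorem periodicExtension_add (g : Fin n → ℤ) (c j : ℤ) :
    periodicExtension hn g c (j + n) = periodicExtension hn g c j + c := by
  have hq : (j + n) / n = j / n + 1 := by
    simpa using Int.add_mul_ediv_right j 1 (Int.natCast_pos.mpr hn).ne'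
  simp only [periodicExtension, Int.add_emod_right, hq]
  ring

theorem periodicExtension_coe (g : Fin n → ℤ) (c : ℤ) (j : Fin n) :
    periodicExtension hn g c j = g j := by
  have hj : (j : ℤ) < n := by exact_mod_cast j.2
  simp [periodicExtension, Int.emod_eq_of_lt (Nat.cast_nonneg _) hj,
    Int.ediv_eq_zero_of_lt (Nat.cast_nonneg _) hj]

theorem strictMono_periodicExtension {g : Fin n → ℤ} {c : ℤ} (hg : StrictMono g)
    (hc : ∀ j, g j < g ⟨0, hn⟩ + c) : StrictMono (periodicExtension hn g c) := by
  have hn' : (0 : ℤ) < n := by exact_mod_cast hn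
  refine strictMono_int_of_lt_succ fun j => ?_
  have hr₀ := Int.emod_nonneg j hn'.ne'
  have hrn := Int.emod_lt_of_pos j hn'
  have hj := Int.emod_add_mul_ediv j n
  rcases (show j % n + 1 < n ∨ j % n + 1 = n by omega) with hlt | heq
  · obtain ⟨hq, hr⟩ := (Int.ediv_emod_unique hn').mpr
      ⟨(by linarith : j % n + 1 + n * (j / n) = j + 1), by omega, hlt⟩
    simp only [periodicExtension, hq, hr]
    have := hg (show (⟨(j % n).toNat, by omega⟩ : Fin n) < ⟨(j % n + 1).toNat, by omega⟩ from
      Fin.mk_lt_mk.mpr (by omega))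
    linarith
  · obtain ⟨hq, hr⟩ := (Int.ediv_emod_unique hn').mpr
      ⟨(by linarith : 0 + n * (j / n + 1) = j + 1), le_rfl, hn'⟩
    simp only [periodicExtension, hq, hr, Int.toNat_zero]
    linarith [hc ⟨(j % n).toNat, by omega⟩]

end PeriodicExtension

/-- Encodes the minimal system of generators `{A j * β - B j * α | j ∈ ℤ}` of `semimodule`,
which has `n` elements. -/
structure Staircase (α β : ℕ) where
  n : ℕ
  two_le : 2 ≤ n
  A : ℤ → ℤ
  B : ℤ → ℤ
  strictMono_A : StrictMono A
  strictMono_B : StrictMono B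
  A_add : ∀ j, A (j + n) = A j + α
  B_add : ∀ j, B (j + n) = B j + β

namespace Staircase

variable {α β : ℕ} (S : Staircase α β)

def gen (j : ℤ) : ℤ := S.A j * β - S.B j * α

def semimodule : Set ℤ := {z | ∃ j, z - S.gen j ∈ Gamma α β}

theorem gen_add_mul (k j : ℤ) : S.gen (j + k * S.n) = S.gen j := by
  simp only [gen, map_add_mul_of_map_add S.A_add, map_add_mul_of_map_add S.B_add]
  ring

theorem gen_mem_semimodule (j : ℤ) : S.gen j ∈ S.semimodule := ⟨j, by simpa using Gamma.zero_mem⟩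

/-- `(Syz S.semimodule)*` is generated by the `B (j + n - 2) * α - A j * β`; `reflect` lists
them as a staircase. -/
def reflect : Staircase α β where
  n := S.n
  two_le := S.two_le
  A j := -S.A (-j)
  B j := -S.B (S.n - 2 - j)
  strictMono_A _ _ h := neg_lt_neg (S.strictMono_A (neg_lt_neg h))
  strictMono_B _ _ h := neg_lt_neg (S.strictMono_B (by omega))
  A_add j := by
    have := S.A_add (-j - S.n)
    simp only [sub_add_cancel] at this
    rw [neg_add, ← sub_eq_add_neg, this]
    ring
  B_add j := by
    have := S.B_add (S.n - 2 - j - S.n)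
    simp only [sub_add_cancel] at this
    rw [show (S.n : ℤ) - 2 - (j + S.n) = S.n - 2 - j - S.n by ring, this]
    ring

theorem reflect_gen (j : ℤ) : S.reflect.gen j = S.B (S.n - 2 - j) * α - S.A (-j) * β := by
  simp only [gen, reflect]
  ring

theorem semimodule_reflect_reflect : S.reflect.reflect.semimodule = S.semimodule := by
  have : S.reflect.reflect.gen = S.gen := by
    funext j
    simp only [gen, reflect, neg_neg, sub_sub_cancel]
  simp only [semimodule, this]

variable (hα : 0 < α) (hcop : Nat.Coprime α β)
include hα hcop

theorem gen_sub_gen_not_mem {i j : ℤ} (hij : i < j) (hji : j < i + S.n) :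
    S.gen j - S.gen i ∉ Gamma α β ∧ S.gen i - S.gen j ∉ Gamma α β := by
  have hA : S.A j < S.A i + α := S.A_add i ▸ S.strictMono_A hji
  have hB : S.B j < S.B i + β := S.B_add i ▸ S.strictMono_B hji
  rw [gen, gen, Gamma.sub_mem_iff_of_lt hα hcop (S.strictMono_A hij) hA,
    Gamma.sub_mem_iff_of_lt' hα hcop (S.strictMono_A hij) hA]
  have := S.strictMono_B hij
  omega

theorem gen_ne_of_lt {i j : ℤ} (hij : i < j) (hji : j < i + S.n) : S.gen i ≠ S.gen j := fun h =>
  (S.gen_sub_gen_not_mem hα hcop hij hji).1 (by simpa [h] using Gamma.zero_mem)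

theorem eq_of_gen_sub_gen_mem {i j : ℤ} (h : S.gen i - S.gen j ∈ Gamma α β) :
    S.gen i = S.gen j := by
  obtain ⟨k, hk₁, hk₂⟩ := exists_add_mul_mem_Ico (by linarith [S.two_le] : (0 : ℤ) < S.n) i j
  rw [← S.gen_add_mul k j] at h ⊢
  rcases hk₁.eq_or_lt with heq | hlt
  · rw [heq]
  · exact absurd h (S.gen_sub_gen_not_mem hα hcop hlt hk₂).2

theorem minGenSet_semimodule : minGenSet α β S.semimodule = range S.gen := by
  ext z
  constructor
  · rintro ⟨⟨j, hj⟩, hmin⟩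
    by_contra hz
    exact hmin _ hj (sub_ne_zero.mpr fun h => hz ⟨j, h.symm⟩)
      (by simpa using S.gen_mem_semimodule j)
  · rintro ⟨j, rfl⟩
    refine ⟨S.gen_mem_semimodule j, fun γ hγ hγ0 ⟨k, hk⟩ => hγ0 ?_⟩
    have hjk : S.gen j - S.gen k ∈ Gamma α β := by
      simpa [sub_right_comm _ γ] using Gamma.add_mem_s17 hk hγ
    rw [S.eq_of_gen_sub_gen_mem hα hcop hjk, sub_right_comm, sub_self, zero_sub] at hk
    linarith [Gamma.nonneg_s17 hk, Gamma.nonneg_s17 hγ]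

theorem dualSet_Syz_semimodule : dualSet α β (Syz α β S.semimodule) = S.reflect.semimodule := by
  have hα' : (0 : ℤ) < α := by exact_mod_cast hα
  ext z
  obtain ⟨s, b, -, -, rfl⟩ := Gamma.exists_eq_mul_sub_mul hα hcop z
  set f : ℤ → ℤ := fun j => (s + S.A j) / α
  have hf : Monotone f := fun i j hij =>
    Int.ediv_le_ediv hα' (by linarith [S.strictMono_A.monotone hij])
  have hfn : ∀ j, f (j + S.n) = f j + 1 := fun j => by
    simpa [f, S.A_add, ← add_assoc] using Int.add_mul_ediv_right (s + S.A j) 1 hα'.ne'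
  have hgen : ∀ j, s * β - b * α + S.gen j ∈ Gamma α β ↔ b + S.B j ≤ β * f j := fun j => by
    rw [gen, show s * β - b * α + (S.A j * β - S.B j * α) = (s + S.A j) * β - (b + S.B j) * α by
      ring, Gamma.mul_sub_mul_mem_iff hα hcop]
  have hreflect : ∀ j, s * β - b * α - S.reflect.gen (-j) ∈ Gamma α β ↔
      b + S.B (j + S.n - 2) ≤ β * f j := fun j => by
    rw [reflect_gen, neg_neg, show s * β - b * α - (S.B (S.n - 2 - -j) * α - S.A j * β) =
      (s + S.A j) * β - (b + S.B (j + S.n - 2)) * α by ring_nf, Gamma.mul_sub_mul_mem_iff hα hcop]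
  rw [mem_dualSet_Syz_iff hα hcop, minGenSet_semimodule S hα hcop, semimodule, mem_ofPred_eq,
    neg_surjective.exists]
  simp only [forall_mem_range, hgen, hreflect, not_le]
  constructor
  · intro hfail
    by_contra! hnone
    obtain ⟨j, hj₁, hj⟩ := exists_consecutive_lt S.two_le hf hfn S.strictMono_B.monotone hnone
    exact S.gen_ne_of_lt hα hcop (sub_one_lt j) (by linarith [S.two_le]) (hfail _ _ hj₁ hj)
  · rintro ⟨i₀, h₀⟩ i j hi hj
    have hn : 0 < S.n := by linarith [S.two_le]
    obtain ⟨k, hk⟩ := exists_add_mul_eq_of_lt hn (Nat.cast_nonneg β) hf hfn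
      S.strictMono_B.monotone S.B_add h₀ hi
    obtain ⟨l, hl⟩ := exists_add_mul_eq_of_lt hn (Nat.cast_nonneg β) hf hfn
      S.strictMono_B.monotone S.B_add h₀ hj
    rw [← S.gen_add_mul k i, hk, ← S.gen_add_mul l j, hl]

end Staircase

section Construction

variable {α β : ℕ} {Δ : Set ℤ} (hα : 0 < α) (hcop : Nat.Coprime α β)
include hα hcop

theorem lt_and_lt_of_mul_sub_mul_mem_minGenSet {s s' b b' : ℤ}
    (hx : s * β - b * α ∈ minGenSet α β Δ) (hy : s' * β - b' * α ∈ minGenSet α β Δ)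
    (hxy : s * β - b * α ≠ s' * β - b' * α) (h : s < s') (h' : s' < s + α) :
    b < b' ∧ b' < b + β := by
  constructor
  · by_contra! hb
    exact hxy (eq_of_sub_mem_of_mem_minGenSet hy hx
      ((Gamma.sub_mem_iff_of_lt hα hcop h h').mpr hb)).symm
  · by_contra! hb
    exact hxy (eq_of_sub_mem_of_mem_minGenSet hx hy
      ((Gamma.sub_mem_iff_of_lt' hα hcop h h').mpr hb))

/-- Sorting the minimal generators by their first coordinate `s ∈ [0, α)` makes the second
coordinate increase as well; extending both quasi-periodically gives a staircase. -/
theorem exists_staircase (hbdd : ∃ m : ℤ, ∀ x ∈ Δ, m ≤ x)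
    (hmod : ∀ x ∈ Δ, ∀ γ ∈ Gamma α β, x + γ ∈ Δ) (hgen : 2 ≤ (minGenSet α β Δ).ncard) :
    ∃ S : Staircase α β, Δ = S.semimodule := by
  set E := minGenSet α β Δ
  choose s b hs₀ hsα hsb using Gamma.exists_eq_mul_sub_mul hα hcop
  have hinj : InjOn s E := fun x hx y hy hxy => by
    have hbxy := eq_of_mul_sub_mul_mem_minGenSet hα (hxy ▸ hsb x ▸ hx) (hsb y ▸ hy)
    rw [hsb x, hsb y, hxy, hbxy]
  have hfin : E.Finite := Finite.of_finite_image
    ((finite_Ico 0 (α : ℤ)).subset (image_subset_iff.mpr fun x _ => ⟨hs₀ x, hsα x⟩)) hinj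
  obtain ⟨e, he, hse⟩ := hfin.exists_enum_strictMono_comp hinj
  have heE : ∀ k, e k ∈ E := fun k => he ▸ mem_range_self k
  have hb : ∀ j k, j < k → b (e j) < b (e k) ∧ b (e k) < b (e j) + β := fun j k hjk =>
    lt_and_lt_of_mul_sub_mul_mem_minGenSet hα hcop (hsb (e j) ▸ heE j) (hsb (e k) ▸ heE k)
      (by rw [← hsb, ← hsb]; exact hse.injective.of_comp.ne hjk.ne)
      (show s (e j) < s (e k) from hse hjk) (by linarith [hsα (e k), hs₀ (e j)])
  have hn : 0 < E.ncard := by omega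
  have hβ : (0 : ℤ) < β := by
    have := hb ⟨0, hn⟩ ⟨1, hgen⟩ (Fin.mk_lt_mk.mpr one_pos)
    linarith
  let S : Staircase α β :=
    { n := E.ncard
      two_le := hgen
      A := periodicExtension hn (s ∘ e) α
      B := periodicExtension hn (b ∘ e) β
      strictMono_A := strictMono_periodicExtension hn hse fun k => by
        simp only [Function.comp]
        linarith [hsα (e k), hs₀ (e ⟨0, hn⟩)]
      strictMono_B := strictMono_periodicExtension hn (fun j k hjk => (hb j k hjk).1) fun k => by
        rcases (show (⟨0, hn⟩ : Fin _) ≤ k from Nat.zero_le _).eq_or_lt with rfl | h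
        · simpa using hβ
        · exact (hb _ k h).2
      A_add := periodicExtension_add hn _ _
      B_add := periodicExtension_add hn _ _ }
  have hgen_mem : ∀ j, S.gen j ∈ E := fun j => by
    have hshift : ∀ x q : ℤ, (s x + α * q) * β - (b x + β * q) * α = x := fun x q => by
      linear_combination -(hsb x)
    simp only [Staircase.gen, S, periodicExtension, Function.comp, hshift]
    exact heE _
  have hgen_coe : ∀ k : Fin E.ncard, S.gen k = e k := fun k => by
    simp only [Staircase.gen, S, periodicExtension_coe, Function.comp]
    exact (hsb (e k)).symm
  refine ⟨S, Set.ext fun z => ⟨fun hz => ?_, fun ⟨j, hj⟩ => ?_⟩⟩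
  · obtain ⟨g, hg, hzg⟩ := exists_mem_minGenSet_sub_mem hbdd hz
    obtain ⟨k, rfl⟩ : g ∈ range e := by rwa [he]
    exact ⟨k, by rwa [hgen_coe]⟩
  · simpa using hmod _ (hgen_mem j).1 _ hj

end Construction

theorem syz_dual_syz_general (α β : ℕ)
    (hα : 2 ≤ α) (hcop : Nat.Coprime α β)
    (Δ : Set ℤ) (hbdd : ∃ m : ℤ, ∀ x ∈ Δ, m ≤ x)
    (hmod : ∀ x ∈ Δ, ∀ γ ∈ Gamma α β, x + γ ∈ Δ)
    (hgen : 2 ≤ (minGenSet α β Δ).ncard) :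
    ∃ c : ℤ, Syz α β (dualSet α β (Syz α β Δ)) =
      (fun x => c + x) '' dualSet α β Δ := by
  have hα₀ : 0 < α := by omega
  obtain ⟨S, rfl⟩ := exists_staircase hα₀ hcop hbdd hmod hgen
  refine ⟨0, ?_⟩
  calc Syz α β (dualSet α β (Syz α β S.semimodule))
      = Syz α β S.reflect.semimodule := by rw [S.dualSet_Syz_semimodule hα₀ hcop]
    _ = dualSet α β (dualSet α β (Syz α β S.reflect.semimodule)) :=
      (dualSet_dualSet hα₀ hcop add_mem_Syz).symm
    _ = dualSet α β S.semimodule := by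
      rw [S.reflect.dualSet_Syz_semimodule hα₀ hcop, S.semimodule_reflect_reflect]
    _ = (fun x => 0 + x) '' dualSet α β S.semimodule := by simp

/-- For an `⟨α,β⟩`-semimodule `Δ` with at least two minimal generators,
`Syz((Syz Δ)*)` is isomorphic to `Δ*`, i.e. equals a shift of `Δ*`. -/
theorem syz_dual_syz (α β : ℕ)
    (hα : 2 ≤ α) (hαβ : α < β) (hcop : Nat.Coprime α β)
    (Δ : Set ℤ) (hne : Δ.Nonempty) (hbdd : ∃ m : ℤ, ∀ x ∈ Δ, m ≤ x)
    (hmod : ∀ x ∈ Δ, ∀ γ ∈ Gamma α β, x + γ ∈ Δ)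
    (hgen : 2 ≤ (minGenSet α β Δ).ncard) :
    ∃ c : ℤ, Syz α β (dualSet α β (Syz α β Δ)) =
      (fun x => c + x) '' dualSet α β Δ :=
  syz_dual_syz_general α β hα hcop Δ hbdd hmod hgen
end
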